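/- arXiv:2603.29011 — 3 statements merged into one kernel-verified Lean document; each statement's English description precedes it below -/
import Mathlib

section
/- Let X be a finite metric space, m ∈ ℕ, and K < ∞. If X is K-TSP-efficient and X admits a biLipschitz embedding into ℓ1^m (i.e. c_{ℓ1^m}(X) < ∞, equivalently c_1^{m,dom}(X,d) < ∞), then (La(X), d_La) admits a C-biLipschitz embedding into an ℓ1-product of 3m ℝ-trees, where C ≤ 6K·c_1^{m,dom}(X,d) ≤ 6Km·c_{ℓ1^m}(X). -/
open Metric Set
open scoped Classical ENNReal NNReal

noncomputable section

/-- The underlying set of the lamplighter space over `X`: a lamp configuration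
(a finite set of lit lamps) together with the position of the lamplighter. -/
abbrev Lamp (X : Type*) := Finset X × X

namespace Lamplighter

variable {X Y Z : Type*}

/-- The length of the path visiting the points of a list in order,
with respect to the distance function `d`. -/
def pathLength (d : X → X → ℝ) : List X → ℝ
  | [] => 0
  | [_] => 0
  | x :: y :: l => d x y + pathLength d (y :: l)

/-- The symmetric difference of the lamp configurations of `p` and `q`, as a set. -/
def sd (p q : Lamp X) : Set X :=
  ((p.1 : Set X) \ (q.1 : Set X)) ∪ ((q.1 : Set X) \ (p.1 : Set X))

/-- The traveling salesman semimetric on the lamplighter space: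
the infimum of lengths of finite paths starting at `p.2`, ending at `q.2`, and
visiting every point of the symmetric difference of the configurations. -/
def TSP (d : X → X → ℝ) (p q : Lamp X) : ℝ :=
  sInf { s : ℝ | ∃ l : List X, l.head? = some p.2 ∧ l.getLast? = some q.2 ∧
    (∀ a ∈ sd p q, a ∈ l) ∧ s = pathLength d l }

/-- The diameter (in `ℝ≥0∞`) of a set with respect to a distance function `d`. -/
def ediamD (d : X → X → ℝ) (A : Set X) : ℝ≥0∞ :=
  ⨆ x ∈ A, ⨆ y ∈ A, ENNReal.ofReal (d x y)

/-- The traveling salesman shortcut semimetric: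
`TSCP((A,x),(B,y)) = diam({x,y} ∪ (A Δ B))`. -/
def TSCP (d : X → X → ℝ) (p q : Lamp X) : ℝ :=
  (ediamD d ({p.2, q.2} ∪ sd p q)).toReal

/-- `ρ((A,x),(B,y))` is `0` if `A = B` and `1` otherwise. -/
def rho (p q : Lamp X) : ℝ := if p.1 = q.1 then 0 else 1

/-- The lamplighter metric `d_La = TSP + ρ`. -/
def dLa (d : X → X → ℝ) (p q : Lamp X) : ℝ := TSP d p q + rho p q

/-- `X` is `K`-TSP-efficient if `TSP ≤ K • TSCP` on `La(X)²`. -/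
def TSPEfficient (d : X → X → ℝ) (K : ℝ) : Prop :=
  ∀ p q : Lamp X, TSP d p q ≤ K * TSCP d p q

/-- A weak `C`-biLipschitz embedding between spaces with distance functions `dY`, `dZ`:
a family of maps `φ t : Y → Z` (for `t > 0`) such that each `φ t` is `σ t`-Lipschitz
and `dY x y ≥ C*t` implies `dZ (φ t x) (φ t y) ≥ t * σ t`. -/
def WeakBiLip (dY : Y → Y → ℝ) (dZ : Z → Z → ℝ) (C : ℝ) : Prop :=
  ∃ φ : ℝ → Y → Z, ∀ t : ℝ, 0 < t → ∃ σ : ℝ, 0 < σ ∧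
    (∀ x y : Y, dZ (φ t x) (φ t y) ≤ σ * dY x y) ∧
    (∀ x y : Y, C * t ≤ dY x y → t * σ ≤ dZ (φ t x) (φ t y))

/-- `f` is a `C`-biLipschitz embedding (an injective map of biLipschitz
distortion at most `C`, allowing an overall scaling factor `s`). -/
def BiLipWith (dY : Y → Y → ℝ) (dZ : Z → Z → ℝ) (C : ℝ) (f : Y → Z) : Prop :=
  Function.Injective f ∧ ∃ s : ℝ, 0 < s ∧
    ∀ x y : Y, s * dY x y ≤ dZ (f x) (f y) ∧ dZ (f x) (f y) ≤ C * s * dY x y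

/-- Nagata dimension at most `n` with constant at most `γ`: for every scale `s > 0`
there is a covering by sets of diameter at most `γ s` such that every set of diameter
less than `s` meets at most `n + 1` members of the covering. -/
def NagataDimD (d : Y → Y → ℝ) (n : ℕ) (γ : ℝ) : Prop :=
  ∀ s : ℝ, 0 < s → ∃ B : Set (Set Y),
    (∀ y : Y, ∃ b ∈ B, y ∈ b) ∧
    (∀ b ∈ B, ediamD d b ≤ ENNReal.ofReal (γ * s)) ∧
    (∀ A : Set Y, ediamD d A < ENNReal.ofReal s →
      {b | b ∈ B ∧ (b ∩ A).Nonempty}.encard ≤ ((n : ℕ∞) + 1))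

/-- Markov type 2 with constant `M`, for the distance function `d`: for every stationary
reversible Markov chain on a finite state space (given by a stationary distribution `μ`
and a reversible stochastic transition matrix `P`), every map `f` into the space, and
every time `t`, `E[d(f(Z_t),f(Z_0))²] ≤ M² t E[d(f(Z_1),f(Z_0))²]`. -/
def HasMarkovType2 (d : Y → Y → ℝ) (M : ℝ) : Prop :=
  ∀ (n : ℕ) (μ : Fin n → ℝ) (P : Matrix (Fin n) (Fin n) ℝ),
    (∀ i, 0 ≤ μ i) → (∑ i, μ i) = 1 →
    (∀ i j, 0 ≤ P i j) → (∀ i, (∑ j, P i j) = 1) →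
    (∀ i j, μ i * P i j = μ j * P j i) →
    ∀ (f : Fin n → Y) (t : ℕ),
      (∑ i, ∑ j, μ i * (P ^ t) i j * d (f i) (f j) ^ 2) ≤
        M ^ 2 * t * ∑ i, ∑ j, μ i * P i j * d (f i) (f j) ^ 2

/-- `D`-doubling: every ball of radius `r` can be covered by `D` balls of radius `r/2`. -/
def Doubling (d : Y → Y → ℝ) (D : ℕ) : Prop :=
  ∀ r : ℝ, 0 < r → ∀ x : Y, ∃ c : Fin D → Y,
    ∀ y : Y, d x y ≤ r → ∃ i, d (c i) y ≤ r / 2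

/-- `A` is an arc from `x` to `y`: the image of an injective continuous map of `[0,1]`
sending the endpoints to `x` and `y`. -/
def IsArc {T : Type*} [MetricSpace T] (x y : T) (A : Set T) : Prop :=
  ∃ γ : ℝ → T, ContinuousOn γ (Icc 0 1) ∧ InjOn γ (Icc 0 1) ∧
    γ 0 = x ∧ γ 1 = y ∧ γ '' (Icc 0 1) = A

/-- `A` is a geodesic segment from `x` to `y`: the image of an isometric embedding
of `[0, dist x y]` sending the endpoints to `x` and `y`. -/
def IsGeodesicSeg {T : Type*} [MetricSpace T] (x y : T) (A : Set T) : Prop :=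
  ∃ γ : ℝ → T, γ 0 = x ∧ γ (dist x y) = y ∧
    (∀ s ∈ Icc (0 : ℝ) (dist x y), ∀ t ∈ Icc (0 : ℝ) (dist x y),
      dist (γ s) (γ t) = |s - t|) ∧
    γ '' (Icc 0 (dist x y)) = A

/-- `T` is an ℝ-tree: any two (distinct) points are joined by a unique arc,
and this arc is a geodesic. -/
def IsRTree (T : Type*) [MetricSpace T] : Prop :=
  ∀ x y : T, x ≠ y →
    (∃ A : Set T, IsArc x y A) ∧
    (∀ A A' : Set T, IsArc x y A → IsArc x y A' → A = A') ∧
    (∀ A : Set T, IsArc x y A → IsGeodesicSeg x y A)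

/-- The sup (ℓ∞-product) distance on a finite product of metric spaces. -/
def piSupDist {n : ℕ} {T : Fin n → Type*} (I : ∀ i, MetricSpace (T i)) :
    (∀ i, T i) → (∀ i, T i) → ℝ :=
  letI := I
  fun f g => dist f g

/-- The ℓ1-product distance on a finite product of metric spaces. -/
def piL1Dist {n : ℕ} {T : Fin n → Type*} (I : ∀ i, MetricSpace (T i)) :
    (∀ i, T i) → (∀ i, T i) → ℝ :=
  letI := I
  fun f g => ∑ i, dist (f i) (g i)

/-- The ℓ1 distance on `ℝ^m`. -/
def l1Dist (m : ℕ) (x y : Fin m → ℝ) : ℝ := ∑ i, |x i - y i|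

/-- The ℓp distance on `ℝ^m`. -/
def lpDist (m : ℕ) (p : ℝ) (x y : Fin m → ℝ) : ℝ :=
  (∑ i, |x i - y i| ^ p) ^ (1 / p)

/-- The (pseudo)distance of the ℝ-star over the index type `ι`: the wedge sum of
copies of `[0,∞)` indexed by `ι`, glued at `0`. -/
def starDist {ι : Type*} (p q : ι × ℝ≥0) : ℝ :=
  if p.1 = q.1 then |(p.2 : ℝ) - (q.2 : ℝ)| else (p.2 : ℝ) + (q.2 : ℝ)

/-- The sup (ℓ∞-product) of finitely many distance functions. -/
def supD {n : ℕ} {T : Fin n → Type*} (d : ∀ i, T i → T i → ℝ) (f g : ∀ i, T i) : ℝ :=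
  ((Finset.univ.sup fun i => (d i (f i) (g i)).toNNReal : ℝ≥0) : ℝ)

/-- The infimum of distortions of biLipschitz embeddings of `(Y, dY)` into `(Z, dZ)`
(`∞` if there is no such embedding). -/
def cEmb (dY : Y → Y → ℝ) (dZ : Z → Z → ℝ) : ℝ≥0∞ :=
  sInf { D : ℝ≥0∞ | ∃ C : ℝ, 0 < C ∧ D = ENNReal.ofReal C ∧
    ∃ f : Y → Z, BiLipWith dY dZ C f }

/-- `c_1^{m,dom}(X,d)`: the infimum of all `D > 0` such that there exist injective
`1`-Lipschitz maps `φ i : X → ℝ` and weights `α i ≥ 0` summing to `1` with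
`∑ i, α i * |φ i x - φ i y| ≥ d x y / D` for all `x y` (`∞` if there is none). -/
def c1dom (d : X → X → ℝ) (m : ℕ) : ℝ≥0∞ :=
  sInf { D : ℝ≥0∞ | ∃ C : ℝ, 0 < C ∧ D = ENNReal.ofReal C ∧
    ∃ (φ : Fin m → X → ℝ) (α : Fin m → ℝ),
      (∀ i, Function.Injective (φ i)) ∧
      (∀ i, ∀ x y : X, |φ i x - φ i y| ≤ d x y) ∧
      (∀ i, 0 ≤ α i) ∧ (∑ i, α i) = 1 ∧
      ∀ x y : X, d x y / C ≤ ∑ i, α i * |φ i x - φ i y| }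

/-- The Hamming distance on the Hamming cube `{0,1}^M`, as a real number. -/
def hamDist {M : ℕ} (x y : Fin M → Bool) : ℝ :=
  ((Finset.univ.filter fun i => x i ≠ y i).card : ℝ)

/-- The star graph `St_{n,k}`: the one-point coalescence of `n` paths of length `k`,
realized inside `ℤ^n` as the multiples `α eᵢ` with `0 ≤ α ≤ k`. -/
def St (n k : ℕ) : Type :=
  {x : Fin n → ℤ // ∃ i : Fin n, (∀ j : Fin n, j ≠ i → x j = 0) ∧ 0 ≤ x i ∧ x i ≤ (k : ℤ)}

/-- The ℓ1 metric on the star graph `St_{n,k}`. -/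
def stDist {n k : ℕ} (x y : St n k) : ℝ := ∑ j, |(x.1 j : ℝ) - (y.1 j : ℝ)|

/-- The endpoint `k eᵢ` of the `i`-th branch of the star graph. -/
def St.endpoint {n k : ℕ} (i : Fin n) : St n k :=
  ⟨fun j => if j = i then (k : ℤ) else 0, i, fun j hj => if_neg hj, by simp, by simp⟩

/-- The cycle metric on `ℤ/nℤ`. -/
def cycDist {n : ℕ} (a b : ZMod n) : ℝ := ((min ((a - b).val) ((b - a).val) : ℕ) : ℝ)

/-- The rectangular grid `G_{k,n} = ([0,k] ∩ ℤ) × ([0,n] ∩ ℤ)`. -/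
def Grid2 (k n : ℕ) : Type :=
  {p : ℤ × ℤ // 0 ≤ p.1 ∧ p.1 ≤ (k : ℤ) ∧ 0 ≤ p.2 ∧ p.2 ≤ (n : ℤ)}

/-- The ℓ1 metric on the grid `G_{k,n}`. -/
def grid2Dist {k n : ℕ} (x y : Grid2 k n) : ℝ :=
  |(x.1.1 : ℝ) - (y.1.1 : ℝ)| + |(x.1.2 : ℝ) - (y.1.2 : ℝ)|

/-- The `m`-dimensional grid `G^m({n_i}) = ∏ i, ([0, n_i] ∩ ℤ)`. -/
def GridM (m : ℕ) (n : Fin m → ℕ) : Type :=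
  {p : Fin m → ℤ // ∀ i, 0 ≤ p i ∧ p i ≤ (n i : ℤ)}

/-- The ℓ1 metric on the `m`-dimensional grid. -/
def gridMDist {m : ℕ} {n : Fin m → ℕ} (x y : GridM m n) : ℝ :=
  ∑ i, |(x.1 i : ℝ) - (y.1 i : ℝ)|

/-!
For a height function `χ : X → ℝ`, a point of `LampTree X χ` is a height `h` together with a
finite set of lit lamps, all at heights `χ a > h`. Moving up from height `h` switches off the
lamps that are passed; two points `P`, `Q` are joined by going up to the height `apex P Q`, the
largest of their heights and of the heights of the lamps in which they differ, and down again, so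
`dist P Q = 2 apex P Q - ht P - ht Q`. Since `apex` satisfies the ultrametric inequality, every
point strictly between `P` and `Q` separates them, which together with these geodesics makes
`LampTree X χ` an ℝ-tree.

Given `ψ : Fin m → X → ℝ` with `∑ |ψ i x - ψ i y| ≤ d(x,y) ≤ D ∑ |ψ i x - ψ i y|`, send
`(A, x)` to the point at height `χ x` over `A` in the trees for `χ = ψ i` and `χ = -ψ i`, and to
the point at a fixed height over `A` in `m` copies of the tree for `χ = 0`. The ℓ1-distance of
the images is `2 ∑ diam ψ i(S) + ρ` with `S = {x, y} ∪ (A Δ B)`, and `∑ diam ψ i(S)` lies between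
`TSCP / D` and `TSP`, so `K`-TSP-efficiency gives distortion at most `2KD`.
-/

universe u

open scoped symmDiff

section RTreeCriterion

variable {T : Type*} [MetricSpace T] {x y : T} {A : Set T}

lemma IsArc.isPreconnected (hA : IsArc x y A) : IsPreconnected A := by
  obtain ⟨δ, hδc, -, -, -, rfl⟩ := hA
  exact isPreconnected_Icc.image δ hδc

lemma IsArc.left_mem (hA : IsArc x y A) : x ∈ A := by
  obtain ⟨δ, -, -, rfl, -, rfl⟩ := hA
  exact mem_image_of_mem δ (left_mem_Icc.2 zero_le_one)

lemma IsArc.right_mem (hA : IsArc x y A) : y ∈ A := by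
  obtain ⟨δ, -, -, -, rfl, rfl⟩ := hA
  exact mem_image_of_mem δ (right_mem_Icc.2 zero_le_one)

lemma IsArc.subset_of_isPreconnected {G : Set T} (hA : IsArc x y A) (hGA : G ⊆ A)
    (hG : IsPreconnected G) (hx : x ∈ G) (hy : y ∈ G) : A ⊆ G := by
  obtain ⟨δ, hδc, hδi, rfl, rfl, rfl⟩ := hA
  rintro _ ⟨t, ht, rfl⟩
  by_contra htG
  have hC₁ : IsClosed (δ '' Icc t 1) :=
    (isCompact_Icc.image_of_continuousOn (hδc.mono (Icc_subset_Icc ht.1 le_rfl))).isClosed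
  have hC₂ : IsClosed (δ '' Icc 0 t) :=
    (isCompact_Icc.image_of_continuousOn (hδc.mono (Icc_subset_Icc le_rfl ht.2))).isClosed
  -- by injectivity the two halves of the arc meet only in `δ t`, which is not in `G`
  have hcover : G ⊆ (δ '' Icc t 1)ᶜ ∪ (δ '' Icc 0 t)ᶜ := by
    rintro z hz
    rw [← compl_inter, mem_compl_iff]
    rintro ⟨⟨r, hr, rfl⟩, ⟨r', hr', hrr'⟩⟩
    have : r' = r := hδi ⟨hr'.1, hr'.2.trans ht.2⟩ ⟨ht.1.trans hr.1, hr.2⟩ hrr'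
    exact htG (le_antisymm (this ▸ hr'.2) hr.1 ▸ hz)
  have hx₁ : δ 0 ∉ δ '' Icc t 1 := by
    rintro ⟨r, hr, hr0⟩
    have : r = 0 := hδi ⟨ht.1.trans hr.1, hr.2⟩ ⟨le_rfl, zero_le_one⟩ hr0
    exact htG (le_antisymm (this ▸ hr.1) ht.1 ▸ hx)
  have hy₂ : δ 1 ∉ δ '' Icc 0 t := by
    rintro ⟨r, hr, hr1⟩
    have : r = 1 := hδi ⟨hr.1, hr.2.trans ht.2⟩ ⟨zero_le_one, le_rfl⟩ hr1
    exact htG (le_antisymm ht.2 (this ▸ hr.2) ▸ hy)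
  obtain ⟨z, hzG, hz₁, hz₂⟩ := hG _ _ hC₁.isOpen_compl hC₂.isOpen_compl hcover
    ⟨δ 0, hx, hx₁⟩ ⟨δ 1, hy, hy₂⟩
  have hzA : z ∈ δ '' Icc 0 t ∪ δ '' Icc t 1 := by
    rw [← image_union, Icc_union_Icc_eq_Icc ht.1 ht.2]
    exact hGA hzG
  exact hzA.elim hz₂ hz₁

lemma IsGeodesicSeg.isArc (hA : IsGeodesicSeg x y A) (hxy : x ≠ y) : IsArc x y A := by
  obtain ⟨γ, h0, hL, hiso, rfl⟩ := hA
  have hpos : 0 < dist x y := dist_pos.2 hxy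
  have hmaps : MapsTo (· * dist x y) (Icc (0 : ℝ) 1) (Icc 0 (dist x y)) := fun r hr =>
    ⟨mul_nonneg hr.1 hpos.le, mul_le_of_le_one_left hpos.le hr.2⟩
  have hcont : ContinuousOn γ (Icc 0 (dist x y)) :=
    (LipschitzOnWith.of_dist_le_mul (K := 1) fun s hs t ht => by
      simp [hiso s hs t ht, Real.dist_eq]).continuousOn
  refine ⟨fun r => γ (r * dist x y), hcont.comp (continuous_mul_const _).continuousOn hmaps,
    fun r hr r' hr' h => ?_, by simpa using h0, by simpa using hL, ?_⟩
  · have := hiso _ (hmaps hr) _ (hmaps hr')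
    rw [show γ (r * dist x y) = γ (r' * dist x y) from h, dist_self, eq_comm, abs_eq_zero,
      ← sub_mul] at this
    linarith [(mul_eq_zero.1 this).resolve_right hpos.ne']
  · rw [← image_image γ (· * dist x y), image_mul_right_Icc zero_le_one hpos.le, zero_mul,
      one_mul]

theorem isRTree_of_between
    (hgeo : ∀ x y : T, ∃ A, IsGeodesicSeg x y A)
    (hsep : ∀ x y z : T, dist x z + dist z y = dist x y →
      ∀ S : Set T, IsPreconnected S → x ∈ S → y ∈ S → z ∈ S) :
    IsRTree T := by
  intro x y hxy
  obtain ⟨G, hG⟩ := hgeo x y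
  have hGarc := hG.isArc hxy
  have hunique : ∀ A, IsArc x y A → A = G := by
    intro A hA
    have hGA : G ⊆ A := by
      obtain ⟨γ, h0, hL, hiso, rfl⟩ := hG
      rintro _ ⟨u, hu, rfl⟩
      refine hsep x y (γ u) ?_ A hA.isPreconnected hA.left_mem hA.right_mem
      have hxu : dist x (γ u) = u := by
        rw [← h0, hiso 0 ⟨le_rfl, dist_nonneg⟩ u hu, zero_sub, abs_neg, abs_of_nonneg hu.1]
      have huy : dist (γ u) y = dist x y - u := by
        conv_lhs => rw [← hL]
        rw [hiso u hu _ ⟨dist_nonneg, le_rfl⟩, abs_sub_comm, abs_of_nonneg (sub_nonneg.2 hu.2)]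
      rw [hxu, huy, add_sub_cancel]
    exact (hA.subset_of_isPreconnected hGA hGarc.isPreconnected hGarc.left_mem
      hGarc.right_mem).antisymm hGA
  exact ⟨⟨G, hGarc⟩, fun A A' hA hA' => (hunique A hA).trans (hunique A' hA').symm,
    fun A hA => hunique A hA ▸ hG⟩

end RTreeCriterion

lemma two_mul_max_sub_eq_abs (a b : ℝ) : 2 * max a b - a - b = |a - b| := by
  rcases le_total a b with h | h
  · rw [max_eq_right h, abs_of_nonpos (sub_nonpos.2 h)]; ring
  · rw [max_eq_left h, abs_of_nonneg (sub_nonneg.2 h)]; ring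

/-- The height at which the geodesic between the points `(a, A)` and `(b, B)` of `LampTree X χ`
turns from going up to going down. -/
def peak (χ : X → ℝ) (a b : ℝ) (A B : Finset X) : ℝ :=
  (insert a (insert b ((A ∆ B).image χ))).max' (by simp)

lemma peak_le_iff {χ : X → ℝ} {a b c : ℝ} {A B : Finset X} :
    peak χ a b A B ≤ c ↔ a ≤ c ∧ b ≤ c ∧ ∀ e ∈ A ∆ B, χ e ≤ c := by
  simp [peak, Finset.max'_le_iff]

lemma peak_comm (χ : X → ℝ) (a b : ℝ) (A B : Finset X) : peak χ a b A B = peak χ b a B A :=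
  eq_of_forall_ge_iff fun c => by simp only [peak_le_iff, symmDiff_comm A B]; tauto

def LampTree (X : Type u) (χ : X → ℝ) : Type u :=
  {p : ℝ × Finset X // ∀ a ∈ p.2, p.1 < χ a}

namespace LampTree

variable {X : Type u} {χ : X → ℝ}

def ht (P : LampTree X χ) : ℝ := P.1.1

def cfg (P : LampTree X χ) : Finset X := P.1.2

lemma ht_lt_of_mem (P : LampTree X χ) {a : X} (ha : a ∈ P.cfg) : P.ht < χ a := P.2 a ha

lemma ext {P Q : LampTree X χ} (hht : P.ht = Q.ht) (hcfg : P.cfg = Q.cfg) : P = Q :=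
  Subtype.ext (Prod.ext hht hcfg)

def point (a : ℝ) (A : Finset X) : LampTree X χ :=
  ⟨(a, A.filter (a < χ ·)), fun _ he => (Finset.mem_filter.1 he).2⟩

@[simp] lemma point_ht (a : ℝ) (A : Finset X) : (point a A : LampTree X χ).ht = a := rfl

@[simp] lemma point_cfg (a : ℝ) (A : Finset X) :
    (point a A : LampTree X χ).cfg = A.filter (a < χ ·) := rfl

lemma point_ht_cfg (P : LampTree X χ) : point P.ht P.cfg = P :=
  ext rfl (Finset.filter_true_of_mem fun _ => P.ht_lt_of_mem)

def apex (P Q : LampTree X χ) : ℝ := peak χ P.ht Q.ht P.cfg Q.cfg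

lemma apex_le_iff {P Q : LampTree X χ} {c : ℝ} :
    apex P Q ≤ c ↔ P.ht ≤ c ∧ Q.ht ≤ c ∧ ∀ e ∈ P.cfg ∆ Q.cfg, χ e ≤ c :=
  peak_le_iff

lemma ht_le_apex_left (P Q : LampTree X χ) : P.ht ≤ apex P Q := (apex_le_iff.1 le_rfl).1

lemma ht_le_apex_right (P Q : LampTree X χ) : Q.ht ≤ apex P Q := (apex_le_iff.1 le_rfl).2.1

lemma le_apex_of_mem (P Q : LampTree X χ) {e : X} (he : e ∈ P.cfg ∆ Q.cfg) :
    χ e ≤ apex P Q :=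
  (apex_le_iff.1 le_rfl).2.2 e he

lemma apex_comm (P Q : LampTree X χ) : apex P Q = apex Q P := peak_comm _ _ _ _ _

lemma apex_self (P : LampTree X χ) : apex P P = P.ht :=
  le_antisymm (apex_le_iff.2 ⟨le_rfl, le_rfl, by simp⟩) (ht_le_apex_left P P)

lemma apex_le_max (P Q R : LampTree X χ) : apex P R ≤ max (apex P Q) (apex Q R) := by
  refine apex_le_iff.2 ⟨(ht_le_apex_left P Q).trans (le_max_left _ _),
    (ht_le_apex_right Q R).trans (le_max_right _ _), fun e he => ?_⟩
  rcases Finset.mem_union.1 (symmDiff_triangle P.cfg Q.cfg R.cfg he) with he | he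
  · exact (le_apex_of_mem P Q he).trans (le_max_left _ _)
  · exact (le_apex_of_mem Q R he).trans (le_max_right _ _)

lemma apex_point (a b : ℝ) (A B : Finset X) :
    apex (point a A : LampTree X χ) (point b B) = peak χ a b A B := by
  refine eq_of_forall_ge_iff fun c => ?_
  simp only [apex, peak_le_iff, point_ht, point_cfg, and_congr_right_iff]
  intro hac hbc
  -- a lamp of `A ∆ B` missing from the symmetric difference of the filtered sets lies
  -- below `a` or `b`, and conversely
  constructor
  · intro h e he
    by_contra hec
    refine hec (h e ?_)
    simp only [Finset.mem_symmDiff, Finset.mem_filter] at he ⊢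
    rcases he with ⟨heA, heB⟩ | ⟨heB, heA⟩
    · exact Or.inl ⟨⟨heA, by linarith⟩, fun h' => heB h'.1⟩
    · exact Or.inr ⟨⟨heB, by linarith⟩, fun h' => heA h'.1⟩
  · intro h e he
    simp only [Finset.mem_symmDiff, Finset.mem_filter, not_and, not_lt] at he
    by_cases heAB : e ∈ A ∆ B
    · exact h e heAB
    · simp only [Finset.mem_symmDiff, not_or, not_and, not_not] at heAB
      rcases he with ⟨⟨heA, -⟩, hB⟩ | ⟨⟨heB, -⟩, hA⟩
      · exact (hB (heAB.1 heA)).trans hbc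
      · exact (hA (heAB.2 heB)).trans hac

instance : MetricSpace (LampTree X χ) where
  dist P Q := 2 * apex P Q - P.ht - Q.ht
  dist_self P := by simp only [apex_self]; ring
  dist_comm P Q := by simp only [apex_comm P Q]; ring
  dist_triangle P Q R := by
    have := apex_le_max P Q R
    have := ht_le_apex_right P Q
    have := ht_le_apex_left Q R
    rcases max_cases (apex P Q) (apex Q R) with ⟨h, -⟩ | ⟨h, -⟩ <;> linarith
  eq_of_dist_eq_zero {P Q} h := by
    have hP := ht_le_apex_left P Q
    have hQ := ht_le_apex_right P Q
    have hsP : apex P Q = P.ht := by linarith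
    have hsQ : apex P Q = Q.ht := by linarith
    refine ext (hsP.symm.trans hsQ) (symmDiff_eq_bot.1 (Finset.eq_empty_of_forall_notMem
      fun e he => ?_))
    have hle := le_apex_of_mem P Q he
    rcases Finset.mem_symmDiff.1 he with ⟨he, -⟩ | ⟨he, -⟩
    · linarith [P.ht_lt_of_mem he]
    · linarith [Q.ht_lt_of_mem he]

lemma dist_eq (P Q : LampTree X χ) : dist P Q = 2 * apex P Q - P.ht - Q.ht := rfl

lemma dist_point_cfg (P Q : LampTree X χ) {a b : ℝ} (ha : P.ht ≤ a) (hb : Q.ht ≤ b) :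
    dist (point a P.cfg : LampTree X χ) (point b Q.cfg) =
      2 * max (max a b) (apex P Q) - a - b := by
  suffices apex (point a P.cfg : LampTree X χ) (point b Q.cfg) = max (max a b) (apex P Q) by
    rw [dist_eq, this, point_ht, point_ht]
  refine eq_of_forall_ge_iff fun c => ?_
  rw [apex_point, peak_le_iff, max_le_iff, max_le_iff, apex_le_iff]
  constructor
  · rintro ⟨hac, hbc, h⟩
    exact ⟨⟨hac, hbc⟩, ha.trans hac, hb.trans hbc, h⟩
  · rintro ⟨⟨hac, hbc⟩, -, -, h⟩
    exact ⟨hac, hbc, h⟩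

lemma isOpen_setOf_apex_lt (P : LampTree X χ) (a : ℝ) :
    IsOpen {w : LampTree X χ | apex w P < a} := by
  refine Metric.isOpen_iff.2 fun w (hw : apex w P < a) =>
    ⟨a - apex w P, sub_pos.2 hw, fun w' hw' => ?_⟩
  rw [mem_ball, dist_eq] at hw'
  have := apex_le_max w' w P
  have := ht_le_apex_left w P
  have := ht_le_apex_left w' w
  show apex w' P < a
  rcases max_cases (apex w' w) (apex w P) with ⟨h, -⟩ | ⟨h, -⟩ <;> linarith

/-- When `z` lies above `P`, this is the set of points `w ≠ z` with `z` between `w` and `P`. -/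
lemma isOpen_setOf_le_apex {P z : LampTree X χ} (hz : apex z P = z.ht) :
    IsOpen {w : LampTree X χ | w ≠ z ∧ z.ht ≤ apex w P} := by
  refine Metric.isOpen_iff.2 fun w ⟨hwz, hw⟩ => ⟨dist w z, dist_pos.2 hwz, fun w' hw' => ?_⟩
  rw [mem_ball] at hw'
  have hapex : apex w z = apex w P := by
    have h₁ := apex_le_max w P z
    have h₂ := apex_le_max w z P
    rw [apex_comm P z, hz] at h₁
    rw [hz] at h₂
    have := ht_le_apex_right w z
    exact le_antisymm (h₁.trans (max_le le_rfl hw)) (h₂.trans (max_le le_rfl this))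
  refine ⟨fun h => (h ▸ hw').ne (dist_comm _ _), not_lt.1 fun hlt => hw'.not_ge ?_⟩
  have := apex_le_max w w' P
  have := ht_le_apex_left w' P
  rw [dist_eq w z, dist_eq w' w, hapex, apex_comm w' w]
  rcases max_cases (apex w w') (apex w' P) with ⟨h, -⟩ | ⟨h, -⟩ <;> linarith

lemma mem_of_isPreconnected {P z w : LampTree X χ} (hz : apex z P = z.ht)
    (hw : z.ht ≤ apex w P) {S : Set (LampTree X χ)} (hS : IsPreconnected S) (hPS : P ∈ S)
    (hwS : w ∈ S) : z ∈ S := by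
  by_contra hzS
  rcases (hz ▸ ht_le_apex_right z P).lt_or_eq with hPz | hPz
  · have hcover : S ⊆ {v | apex v P < z.ht} ∪ {v | v ≠ z ∧ z.ht ≤ apex v P} :=
      fun v hv => (lt_or_ge (apex v P) z.ht).imp id fun h => ⟨fun hvz => hzS (hvz ▸ hv), h⟩
    obtain ⟨v, -, hvU, hvV⟩ := hS _ _ (isOpen_setOf_apex_lt P z.ht) (isOpen_setOf_le_apex hz)
      hcover ⟨P, hPS, show apex P P < z.ht by rwa [apex_self]⟩
      ⟨w, hwS, fun h => hzS (h ▸ hwS), hw⟩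
    exact hvV.2.not_gt hvU
  · refine hzS (eq_of_dist_eq_zero (x := z) (y := P) ?_ ▸ hPS)
    rw [dist_eq, hz, hPz]
    ring

lemma mem_of_isPreconnected_of_between {P Q z : LampTree X χ}
    (h : dist P z + dist z Q = dist P Q) {S : Set (LampTree X χ)} (hS : IsPreconnected S)
    (hP : P ∈ S) (hQ : Q ∈ S) : z ∈ S := by
  rw [dist_eq, dist_eq, dist_eq] at h
  have := ht_le_apex_left z Q
  have := ht_le_apex_right P z
  rcases le_max_iff.1 (apex_le_max P z Q) with hle | hle
  · exact mem_of_isPreconnected (P := Q) (w := P) (by linarith) (by linarith) hS hQ hP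
  · exact mem_of_isPreconnected (P := P) (w := Q) (by rw [apex_comm]; linarith)
      (by rw [apex_comm]; linarith) hS hP hQ

lemma exists_isGeodesicSeg (P Q : LampTree X χ) : ∃ A, IsGeodesicSeg P Q A := by
  set s := apex P Q with hs
  have hPs : P.ht ≤ s := ht_le_apex_left P Q
  have hQs : Q.ht ≤ s := ht_le_apex_right P Q
  have hL : dist P Q = (s - P.ht) + (s - Q.ht) := by rw [dist_eq]; ring
  have hmeet : (point s P.cfg : LampTree X χ) = point s Q.cfg :=
    eq_of_dist_eq_zero (by rw [dist_point_cfg P Q hPs hQs, ← hs, max_self, max_self]; ring)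
  let γ : ℝ → LampTree X χ := fun u =>
    if u ≤ s - P.ht then point (P.ht + u) P.cfg else point (2 * s - P.ht - u) Q.cfg
  have hγ0 : γ 0 = P := by simp [γ, hPs, point_ht_cfg]
  have hγL : γ (dist P Q) = Q := by
    by_cases h : dist P Q ≤ s - P.ht
    · have hQ : Q.ht = s := by linarith
      simp only [γ, if_pos h]
      rw [show P.ht + dist P Q = s by linarith, hmeet, ← hQ, point_ht_cfg]
    · simp only [γ, if_neg h, show 2 * s - P.ht - dist P Q = Q.ht by linarith, point_ht_cfg]
  refine ⟨_, γ, hγ0, hγL, fun u hu v hv => ?_, rfl⟩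
  rw [hL] at hu hv
  obtain ⟨hu₀, hu₁⟩ := hu
  obtain ⟨hv₀, hv₁⟩ := hv
  have hQQ : apex Q Q = Q.ht := apex_self Q
  have hPP : apex P P = P.ht := apex_self P
  have hQP : apex Q P = s := apex_comm Q P
  simp only [γ]
  split_ifs with h₁ h₂ h₂
  · rw [dist_point_cfg P P (by linarith) (by linarith), hPP,
      max_eq_left (le_max_of_le_left (by linarith)), two_mul_max_sub_eq_abs,
      add_sub_add_left_eq_sub]
  · rw [dist_point_cfg P Q (by linarith) (by linarith),
      max_eq_right (max_le (by linarith) (by linarith)), abs_of_nonpos (by linarith)]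
    ring
  · rw [dist_point_cfg Q P (by linarith) (by linarith), hQP,
      max_eq_right (max_le (by linarith) (by linarith)), abs_of_nonneg (by linarith)]
    ring
  · rw [dist_point_cfg Q Q (by linarith) (by linarith), hQQ,
      max_eq_left (le_max_of_le_left (by linarith)), two_mul_max_sub_eq_abs, abs_sub_comm]
    congr 1
    ring

theorem isRTree (χ : X → ℝ) : IsRTree (LampTree X χ) :=
  isRTree_of_between exists_isGeodesicSeg fun _ _ _ => mem_of_isPreconnected_of_between

end LampTree

section Tours

@[simp] lemma pathLength_cons_cons (d : X → X → ℝ) (x y : X) (l : List X) :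
    pathLength d (x :: y :: l) = d x y + pathLength d (y :: l) := rfl

lemma pathLength_map {Y : Type*} (d : Y → Y → ℝ) (f : X → Y) :
    ∀ l : List X, pathLength d (l.map f) = pathLength (fun a b => d (f a) (f b)) l
  | [] | [_] => rfl
  | x :: y :: l => by
    change d (f x) (f y) + pathLength d ((y :: l).map f) = _
    rw [pathLength_map d f (y :: l)]
    rfl

lemma pathLength_mono {d₁ d₂ : X → X → ℝ} (h : ∀ a b, d₁ a b ≤ d₂ a b) :
    ∀ l : List X, pathLength d₁ l ≤ pathLength d₂ l
  | [] | [_] => le_rfl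
  | x :: y :: l => by simpa using add_le_add (h x y) (pathLength_mono h (y :: l))

lemma pathLength_sum {ι : Type*} (s : Finset ι) (d : ι → X → X → ℝ) :
    ∀ l : List X, pathLength (fun a b => ∑ i ∈ s, d i a b) l = ∑ i ∈ s, pathLength (d i) l
  | [] | [_] => by simp [pathLength]
  | x :: y :: l => by simp [pathLength_sum s d (y :: l), Finset.sum_add_distrib]

lemma dist_le_pathLength [PseudoMetricSpace X] :
    ∀ {l : List X} {u v : X}, u ∈ l → v ∈ l → dist u v ≤ pathLength dist l
  | [_], _, _, hu, hv => by simp_all [pathLength]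
  | x :: y :: l, u, v, hu, hv => by
    have hrest : 0 ≤ pathLength dist (y :: l) :=
      (dist_self y).symm.le.trans (dist_le_pathLength List.mem_cons_self List.mem_cons_self)
    have hfirst : ∀ w ∈ x :: y :: l, dist x w ≤ pathLength dist (x :: y :: l) := by
      intro w hw
      rw [pathLength_cons_cons]
      rcases List.mem_cons.1 hw with rfl | hw
      · rw [dist_self]
        linarith [dist_nonneg (x := w) (y := y)]
      · linarith [dist_triangle x y w, dist_le_pathLength List.mem_cons_self hw]
    rcases List.mem_cons.1 hu with rfl | hu'
    · exact hfirst v hv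
    rcases List.mem_cons.1 hv with rfl | hv'
    · exact dist_comm u v ▸ hfirst u hu
    · rw [pathLength_cons_cons]
      linarith [dist_le_pathLength hu' hv', dist_nonneg (x := x) (y := y)]

def support (p q : Lamp X) : Finset X := {p.2, q.2} ∪ p.1 ∆ q.1

lemma left_mem_support (p q : Lamp X) : p.2 ∈ support p q := by simp [support]

lemma support_nonempty (p q : Lamp X) : (support p q).Nonempty := ⟨p.2, left_mem_support p q⟩

lemma mem_sd {p q : Lamp X} {a : X} : a ∈ sd p q ↔ a ∈ p.1 ∆ q.1 := by
  simp [sd, Finset.mem_symmDiff]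

lemma coe_support (p q : Lamp X) : ({p.2, q.2} ∪ sd p q : Set X) = support p q := by
  ext
  simp [support, mem_sd, Finset.mem_symmDiff, Set.mem_symmDiff, or_assoc]

lemma le_TSP {d : X → X → ℝ} {p q : Lamp X} {c : ℝ}
    (h : ∀ l : List X, l.head? = some p.2 → l.getLast? = some q.2 →
      (∀ a ∈ sd p q, a ∈ l) → c ≤ pathLength d l) :
    c ≤ TSP d p q := by
  refine le_csInf ⟨_, p.2 :: ((p.1 ∆ q.1).toList ++ [q.2]), rfl, ?_, ?_, rfl⟩ ?_
  · rw [← List.cons_append, List.getLast?_concat]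
  · intro a ha
    simp [Finset.mem_toList, mem_sd.1 ha]
  · rintro _ ⟨l, hh, hl, hsd, rfl⟩
    exact h l hh hl hsd

lemma mem_of_tour {p q : Lamp X} {l : List X} (hh : l.head? = some p.2)
    (hl : l.getLast? = some q.2) (hsd : ∀ a ∈ sd p q, a ∈ l) {a : X}
    (ha : a ∈ support p q) : a ∈ l := by
  simp only [support, Finset.mem_union, Finset.mem_insert, Finset.mem_singleton] at ha
  rcases ha with (rfl | rfl) | ha
  · exact List.mem_of_mem_head? hh
  · exact List.mem_of_mem_getLast? hl
  · exact hsd a (mem_sd.2 ha)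

lemma dist_le_TSP [PseudoMetricSpace X] (p q : Lamp X) : dist p.2 q.2 ≤ TSP dist p q :=
  le_TSP fun _ hh hl _ => dist_le_pathLength (List.mem_of_mem_head? hh)
    (List.mem_of_mem_getLast? hl)

lemma rho_nonneg (p q : Lamp X) : 0 ≤ rho p q := by
  unfold rho; split_ifs <;> norm_num

lemma dLa_nonneg [PseudoMetricSpace X] (p q : Lamp X) : 0 ≤ dLa dist p q :=
  add_nonneg (dist_nonneg.trans (dist_le_TSP p q)) (rho_nonneg p q)

lemma eq_of_dLa_nonpos [MetricSpace X] {p q : Lamp X} (h : dLa dist p q ≤ 0) : p = q := by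
  have hTSP := dist_nonneg.trans (dist_le_TSP p q)
  have hρ := rho_nonneg p q
  have hcfg : p.1 = q.1 := by
    by_contra hne
    simp only [dLa, rho, if_neg hne] at h
    linarith
  have hpt : p.2 = q.2 := dist_le_zero.1 ((dist_le_TSP p q).trans (by unfold dLa at h; linarith))
  exact Prod.ext hcfg hpt

lemma abs_sub_le_sup'_sub_inf' {S : Finset X} (hS : S.Nonempty) (f : X → ℝ) {u v : X}
    (hu : u ∈ S) (hv : v ∈ S) : |f u - f v| ≤ S.sup' hS f - S.inf' hS f := by
  have := S.le_sup' f hu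
  have := S.le_sup' f hv
  have := S.inf'_le f hu
  have := S.inf'_le f hv
  exact abs_sub_le_iff.2 ⟨by linarith, by linarith⟩

lemma sup'_neg {S : Finset X} (hS : S.Nonempty) (f : X → ℝ) :
    S.sup' hS (-f) = -S.inf' hS f :=
  eq_of_forall_ge_iff fun c => by simp [Finset.sup'_le_iff, Finset.le_inf'_iff, neg_le]

def spreadSum {m : ℕ} (ψ : Fin m → X → ℝ) (p q : Lamp X) : ℝ :=
  ∑ i, ((support p q).sup' (support_nonempty p q) (ψ i) -
    (support p q).inf' (support_nonempty p q) (ψ i))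

variable {m : ℕ} (ψ : Fin m → X → ℝ)

lemma spreadSum_nonneg (p q : Lamp X) : 0 ≤ spreadSum ψ p q :=
  Finset.sum_nonneg fun i _ => (abs_nonneg _).trans
    (abs_sub_le_sup'_sub_inf' _ (ψ i) (left_mem_support p q) (left_mem_support p q))

lemma spreadSum_le_TSP [PseudoMetricSpace X] (hlip : ∀ x y, ∑ i, |ψ i x - ψ i y| ≤ dist x y)
    (p q : Lamp X) : spreadSum ψ p q ≤ TSP dist p q := by
  refine le_TSP fun l hh hl hsd => ?_
  calc spreadSum ψ p q
      ≤ ∑ i, pathLength (fun a b => |ψ i a - ψ i b|) l := by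
        refine Finset.sum_le_sum fun i _ => ?_
        obtain ⟨u, hu, hsup⟩ := (support p q).exists_mem_eq_sup' (support_nonempty p q) (ψ i)
        obtain ⟨v, hv, hinf⟩ := (support p q).exists_mem_eq_inf' (support_nonempty p q) (ψ i)
        rw [hsup, hinf]
        refine (le_abs_self _).trans ?_
        simp only [← Real.dist_eq]
        rw [← pathLength_map]
        exact dist_le_pathLength (List.mem_map_of_mem (mem_of_tour hh hl hsd hu))
          (List.mem_map_of_mem (mem_of_tour hh hl hsd hv))
    _ = pathLength (fun a b => ∑ i, |ψ i a - ψ i b|) l := (pathLength_sum _ _ l).symm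
    _ ≤ pathLength dist l := pathLength_mono hlip l

lemma TSCP_le_mul_spreadSum [PseudoMetricSpace X] {D : ℝ} (hD : 0 ≤ D)
    (hlow : ∀ x y, dist x y ≤ D * ∑ i, |ψ i x - ψ i y|) (p q : Lamp X) :
    TSCP dist p q ≤ D * spreadSum ψ p q := by
  refine ENNReal.toReal_le_of_le_ofReal (mul_nonneg hD (spreadSum_nonneg ψ p q)) ?_
  rw [ediamD, coe_support]
  refine iSup₂_le fun u hu => iSup₂_le fun v hv => ENNReal.ofReal_le_ofReal ?_
  exact (hlow u v).trans (mul_le_mul_of_nonneg_left (Finset.sum_le_sum fun i _ =>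
    abs_sub_le_sup'_sub_inf' _ (ψ i) hu hv) hD)

end Tours

namespace LampTree

variable {X : Type u}

lemma dist_point_lamp (χ : X → ℝ) (p q : Lamp X) :
    dist (point (χ p.2) p.1 : LampTree X χ) (point (χ q.2) q.1) =
      2 * (support p q).sup' (support_nonempty p q) χ - χ p.2 - χ q.2 := by
  rw [dist_eq, apex_point, point_ht, point_ht]
  congr 3
  refine eq_of_forall_ge_iff fun c => ?_
  simp [peak_le_iff, Finset.sup'_le_iff, support, or_imp, forall_and]

lemma dist_point_neg_const {c : ℝ} (hc : 0 < c) (p q : Lamp X) :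
    dist (point (-c) p.1 : LampTree X 0) (point (-c) q.1) = 2 * c * rho p q := by
  by_cases hpq : p.1 = q.1
  · simp [rho, hpq]
  obtain ⟨e, he⟩ : (p.1 ∆ q.1).Nonempty := Finset.nonempty_iff_ne_empty.2
    fun h => hpq (symmDiff_eq_bot.1 h)
  have hpeak : peak 0 (-c) (-c) p.1 q.1 = 0 := by
    refine le_antisymm (peak_le_iff.2 ⟨by linarith, by linarith, fun _ _ => le_rfl⟩) ?_
    exact (peak_le_iff.1 (le_refl (peak (0 : X → ℝ) (-c) (-c) p.1 q.1))).2.2 e he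
  rw [dist_eq, apex_point, hpeak, point_ht, point_ht, rho, if_neg hpq]
  ring

end LampTree

section Embedding

variable {X : Type u} {m : ℕ}

def treeHeight (ψ : Fin m → X → ℝ) (ki : Fin 3 × Fin m) : X → ℝ :=
  ![ψ ki.2, -ψ ki.2, 0] ki.1

/-- In the last `m` trees all lamplighters sit at the same height, so these trees only see the
lamps, each contributing `ρ / m`. -/
def lampHeight (ψ : Fin m → X → ℝ) (ki : Fin 3 × Fin m) (x : X) : ℝ :=
  ![ψ ki.2 x, -ψ ki.2 x, -(2 * m : ℝ)⁻¹] ki.1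

def lampEmbedding (ψ : Fin m → X → ℝ) (p : Lamp X) :
    ∀ j : Fin (3 * m), LampTree X (treeHeight ψ (finProdFinEquiv.symm j)) :=
  fun j => LampTree.point (lampHeight ψ (finProdFinEquiv.symm j) p.2) p.1

lemma piL1Dist_lampEmbedding (hm : m ≠ 0) (ψ : Fin m → X → ℝ) (p q : Lamp X) :
    piL1Dist (fun _ => inferInstance) (lampEmbedding ψ p) (lampEmbedding ψ q) =
      2 * spreadSum ψ p q + rho p q := by
  let g : Fin 3 × Fin m → ℝ := fun ki =>
    dist (LampTree.point (lampHeight ψ ki p.2) p.1 : LampTree X (treeHeight ψ ki))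
      (LampTree.point (lampHeight ψ ki q.2) q.1)
  have hsum : piL1Dist (fun _ => inferInstance) (lampEmbedding ψ p) (lampEmbedding ψ q) =
      ∑ ki, g ki :=
    finProdFinEquiv.symm.sum_comp g
  have hc : (0 : ℝ) < (2 * m : ℝ)⁻¹ := by positivity
  have g₀ : ∀ i, g (0, i) =
      2 * (support p q).sup' (support_nonempty p q) (ψ i) - ψ i p.2 - ψ i q.2 := fun i =>
    LampTree.dist_point_lamp (ψ i) p q
  have g₁ : ∀ i, g (1, i) =
      -2 * (support p q).inf' (support_nonempty p q) (ψ i) + ψ i p.2 + ψ i q.2 := fun i =>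
    (LampTree.dist_point_lamp (-ψ i) p q).trans
      (by rw [sup'_neg, Pi.neg_apply, Pi.neg_apply]; ring)
  have g₂ : ∀ i, g (2, i) = 2 * (2 * m : ℝ)⁻¹ * rho p q := fun i =>
    LampTree.dist_point_neg_const hc p q
  have hρ : (m : ℝ) * (2 * (2 * m : ℝ)⁻¹ * rho p q) = rho p q := by field_simp
  rw [hsum, Fintype.sum_prod_type, Fin.sum_univ_three]
  simp only [g₀, g₁, g₂, ← Finset.sum_add_distrib, Finset.sum_const, Finset.card_univ,
    Fintype.card_fin, nsmul_eq_mul, hρ, spreadSum, Finset.mul_sum]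
  congr 1
  exact Finset.sum_congr rfl fun i _ => by ring

end Embedding

lemma BiLipWith.mono {dY : Y → Y → ℝ} {dZ : Z → Z → ℝ} {C C' : ℝ} {f : Y → Z}
    (hY : ∀ x y, 0 ≤ dY x y) (hC : C ≤ C') (hf : BiLipWith dY dZ C f) :
    BiLipWith dY dZ C' f := by
  obtain ⟨hinj, s, hs, h⟩ := hf
  refine ⟨hinj, s, hs, fun x y => ⟨(h x y).1, (h x y).2.trans ?_⟩⟩
  gcongr
  exact hY x y

theorem exists_biLipWith_piL1Dist_rTree {X : Type u} [MetricSpace X] {m : ℕ} (hm : m ≠ 0)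
    {K D : ℝ} (hK : 1 ≤ K) (hD : 1 ≤ D) (heff : TSPEfficient (dist : X → X → ℝ) K)
    (ψ : Fin m → X → ℝ) (hlip : ∀ x y, ∑ i, |ψ i x - ψ i y| ≤ dist x y)
    (hlow : ∀ x y, dist x y ≤ D * ∑ i, |ψ i x - ψ i y|) :
    ∃ (T : Fin (3 * m) → Type u) (I : ∀ i, MetricSpace (T i)),
      (∀ i, @IsRTree (T i) (I i)) ∧
      ∃ f : Lamp X → ∀ i, T i,
        BiLipWith (dLa (dist : X → X → ℝ)) (piL1Dist I) (2 * K * D) f := by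
  refine ⟨_, fun _ => inferInstance, fun _ => LampTree.isRTree _, lampEmbedding ψ, ?_⟩
  have hKD : 1 ≤ K * D := one_le_mul_of_one_le_of_one_le hK hD
  have hbounds : ∀ p q, (K * D)⁻¹ * dLa dist p q ≤
        piL1Dist (fun _ => inferInstance) (lampEmbedding ψ p) (lampEmbedding ψ q) ∧
      piL1Dist (fun _ => inferInstance) (lampEmbedding ψ p) (lampEmbedding ψ q) ≤
        2 * K * D * (K * D)⁻¹ * dLa dist p q := by
    intro p q
    have hTSP : TSP dist p q ≤ K * D * spreadSum ψ p q := by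
      rw [mul_assoc]
      exact (heff p q).trans (mul_le_mul_of_nonneg_left
        (TSCP_le_mul_spreadSum ψ (by linarith) hlow p q) (by linarith))
    have hS := spreadSum_nonneg ψ p q
    have hρ := rho_nonneg p q
    rw [piL1Dist_lampEmbedding hm, dLa, inv_mul_le_iff₀ (by positivity),
      show 2 * K * D * (K * D)⁻¹ = 2 by field_simp]
    constructor
    · nlinarith
    · linarith [spreadSum_le_TSP ψ hlip p q]
  refine ⟨fun p q hpq => eq_of_dLa_nonpos ?_, (K * D)⁻¹, by positivity, hbounds⟩
  have h := (hbounds p q).1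
  rw [hpq] at h
  simp only [piL1Dist, dist_self, Finset.sum_const_zero] at h
  exact nonpos_of_mul_nonpos_right h (by positivity)

lemma exists_coords_of_c1dom_lt {d : X → X → ℝ} {m : ℕ} {D : ℝ}
    (h : c1dom d m < ENNReal.ofReal D) :
    ∃ ψ : Fin m → X → ℝ, (∀ x y, ∑ i, |ψ i x - ψ i y| ≤ d x y) ∧
      ∀ x y, d x y ≤ D * ∑ i, |ψ i x - ψ i y| := by
  obtain ⟨_, ⟨C, hC, rfl, φ, α, -, hφ, hα, hαsum, hlow⟩, hCD⟩ := sInf_lt_iff.1 h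
  have hCD := (ENNReal.ofReal_lt_ofReal_iff'.1 hCD).1
  have habs : ∀ x y, ∑ i, |α i * φ i x - α i * φ i y| = ∑ i, α i * |φ i x - φ i y| :=
    fun x y => Finset.sum_congr rfl fun i _ => by rw [← mul_sub, abs_mul, abs_of_nonneg (hα i)]
  refine ⟨fun i x => α i * φ i x, fun x y => ?_, fun x y => ?_⟩
  · calc ∑ i, |α i * φ i x - α i * φ i y| = ∑ i, α i * |φ i x - φ i y| := habs x y
      _ ≤ ∑ i, α i * d x y := Finset.sum_le_sum fun i _ =>
          mul_le_mul_of_nonneg_left (hφ i x y) (hα i)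
      _ = d x y := by rw [← Finset.sum_mul, hαsum, one_mul]
  · have hsum : 0 ≤ ∑ i, α i * |φ i x - φ i y| :=
      Finset.sum_nonneg fun i _ => mul_nonneg (hα i) (abs_nonneg _)
    rw [habs]
    calc d x y ≤ C * ∑ i, α i * |φ i x - φ i y| := (div_le_iff₀' hC).1 (hlow x y)
      _ ≤ D * ∑ i, α i * |φ i x - φ i y| := mul_le_mul_of_nonneg_right hCD.le hsum

lemma exists_coords_of_cEmb_lt {d : X → X → ℝ} {m : ℕ} {D : ℝ}
    (h : cEmb d (l1Dist m) < ENNReal.ofReal D) :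
    ∃ ψ : Fin m → X → ℝ, (∀ x y, ∑ i, |ψ i x - ψ i y| ≤ d x y) ∧
      ∀ x y, d x y ≤ D * ∑ i, |ψ i x - ψ i y| := by
  obtain ⟨_, ⟨C, hC, rfl, g, -, s, hs, hg⟩, hCD⟩ := sInf_lt_iff.1 h
  have hCD := (ENNReal.ofReal_lt_ofReal_iff'.1 hCD).1
  have hCs : 0 < C * s := mul_pos hC hs
  have hscale : ∀ x y,
      ∑ i, |g x i / (C * s) - g y i / (C * s)| = l1Dist m (g x) (g y) / (C * s) := fun x y => by
      rw [l1Dist, Finset.sum_div]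
      exact Finset.sum_congr rfl fun i _ => by rw [← sub_div, abs_div, abs_of_pos hCs]
  refine ⟨fun i x => g x i / (C * s), fun x y => ?_, fun x y => ?_⟩
  · rw [hscale, div_le_iff₀ hCs, mul_comm]
    exact (hg x y).2
  · rw [hscale]
    have hl1 : 0 ≤ l1Dist m (g x) (g y) := Finset.sum_nonneg fun i _ => abs_nonneg _
    calc d x y ≤ C * (l1Dist m (g x) (g y) / (C * s)) := by
          rw [← mul_div_assoc, mul_div_mul_left _ _ hC.ne', le_div_iff₀ hs, mul_comm]
          exact (hg x y).1
      _ ≤ D * (l1Dist m (g x) (g y) / (C * s)) := by gcongr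

lemma c1dom_zero (d : X → X → ℝ) : c1dom d 0 = ⊤ :=
  sInf_eq_top.2 fun _ ⟨_, _, _, _, _, _, _, _, hα, _⟩ => by simp at hα

theorem statement12_general (X : Type u) [MetricSpace X] (m : ℕ) (K : ℝ) (hK : 1 ≤ K)
    (heff : TSPEfficient (dist : X → X → ℝ) K)
    (hfin : c1dom (dist : X → X → ℝ) m ≠ ⊤) :
    (∀ D : ℝ, 1 ≤ D → c1dom (dist : X → X → ℝ) m < ENNReal.ofReal D →
      ∃ (T : Fin (3 * m) → Type u) (I : ∀ i, MetricSpace (T i)),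
        (∀ i, @IsRTree (T i) (I i)) ∧
        ∃ f : Lamp X → ∀ i, T i,
          BiLipWith (dLa (dist : X → X → ℝ)) (piL1Dist I) (6 * K * D) f) ∧
    (∀ D : ℝ, 1 ≤ D → cEmb (dist : X → X → ℝ) (l1Dist m) < ENNReal.ofReal D →
      ∃ (T : Fin (3 * m) → Type u) (I : ∀ i, MetricSpace (T i)),
        (∀ i, @IsRTree (T i) (I i)) ∧
        ∃ f : Lamp X → ∀ i, T i,
          BiLipWith (dLa (dist : X → X → ℝ)) (piL1Dist I) (6 * K * m * D) f) := by
  have hm : m ≠ 0 := by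
    rintro rfl
    exact hfin (c1dom_zero _)
  have hm1 : (1 : ℝ) ≤ m := Nat.one_le_cast.2 (Nat.one_le_iff_ne_zero.2 hm)
  refine ⟨fun D hD hlt => ?_, fun D hD hlt => ?_⟩
  · obtain ⟨ψ, hlip, hlow⟩ := exists_coords_of_c1dom_lt hlt
    obtain ⟨T, I, hT, f, hf⟩ := exists_biLipWith_piL1Dist_rTree hm hK hD heff ψ hlip hlow
    exact ⟨T, I, hT, f, hf.mono dLa_nonneg (by nlinarith)⟩
  · obtain ⟨ψ, hlip, hlow⟩ := exists_coords_of_cEmb_lt hlt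
    obtain ⟨T, I, hT, f, hf⟩ := exists_biLipWith_piL1Dist_rTree hm hK hD heff ψ hlip hlow
    refine ⟨T, I, hT, f, hf.mono dLa_nonneg ?_⟩
    nlinarith [mul_le_mul_of_nonneg_left hm1 (by nlinarith : (0 : ℝ) ≤ K * D)]

/-- Let `X` be a finite `K`-TSP-efficient metric space that biLipschitz
embeds into `ℓ1^m` (i.e. `c_1^{m,dom}(X,d) < ∞`). Then `(La(X), d_La)` admits a
`C`-biLipschitz embedding into an ℓ1-product of `3m` ℝ-trees with
`C ≤ 6K · c_1^{m,dom}(X,d) ≤ 6Km · c_{ℓ1^m}(X)` (expressed here by: for every `D ≥ 1`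
strictly above the respective infimum, there is such an embedding with constant `6KD`,
resp. `6KmD`). -/
theorem statement12 (X : Type u) [MetricSpace X] [Fintype X] (m : ℕ) (K : ℝ) (hK : 1 ≤ K)
    (heff : TSPEfficient (dist : X → X → ℝ) K)
    (hfin : c1dom (dist : X → X → ℝ) m ≠ ⊤) :
    (∀ D : ℝ, 1 ≤ D → c1dom (dist : X → X → ℝ) m < ENNReal.ofReal D →
      ∃ (T : Fin (3 * m) → Type u) (I : ∀ i, MetricSpace (T i)),
        (∀ i, @IsRTree (T i) (I i)) ∧
        ∃ f : Lamp X → ∀ i, T i,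
          BiLipWith (dLa (dist : X → X → ℝ)) (piL1Dist I) (6 * K * D) f) ∧
    (∀ D : ℝ, 1 ≤ D → cEmb (dist : X → X → ℝ) (l1Dist m) < ENNReal.ofReal D →
      ∃ (T : Fin (3 * m) → Type u) (I : ∀ i, MetricSpace (T i)),
        (∀ i, @IsRTree (T i) (I i)) ∧
        ∃ f : Lamp X → ∀ i, T i,
          BiLipWith (dLa (dist : X → X → ℝ)) (piL1Dist I) (6 * K * m * D) f) :=
  statement12_general X m K hK heff hfin

end Lamplighter
end
end

section
/- For all n,k ∈ ℕ, c_1^{2^n−1,dom}(St_{n,k}, d) ≤ 2. More precisely, letting E = {ke_i : 1 ≤ i ≤ n} and, for each nonempty A ⊆ {1,…,n}, defining φ_A: St_{n,k} → ℝ by φ_A(x) = min{ d(x, ke_i) : i ∈ A }, each φ_A is 1-Lipschitz, and for all x,y ∈ St_{n,k}, (1/(2^n − 1)) Σ_{∅ ≠ A ⊆ {1,…,n}} |φ_A(x) − φ_A(y)| ≥ d(x,y)/2. -/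
open Metric Set
open scoped Classical ENNReal NNReal

noncomputable section

namespace Lamplighter

variable {X Y Z : Type*}

section Statement14Aux
open scoped symmDiff

variable {n k : ℕ}

lemma st_rep (x : St n k) : ∃ (i : Fin n) (a : ℤ), 0 ≤ a ∧ a ≤ (k : ℤ) ∧
    x.1 = fun j => if j = i then a else 0 := by
  obtain ⟨i, h1, h2, h3⟩ := x.2
  exact ⟨i, x.1 i, h2, h3, funext fun j => by by_cases h : j = i <;> simp [h, h1 j]⟩

lemma stDist_eq {x y : St n k} {i j : Fin n} {a b : ℤ} (ha : 0 ≤ a) (hb : 0 ≤ b)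
    (hx : x.1 = fun m => if m = i then a else 0) (hy : y.1 = fun m => if m = j then b else 0) :
    stDist x y = if i = j then |(a : ℝ) - b| else (a : ℝ) + b := by
  unfold stDist
  rw [hx, hy]
  by_cases hij : i = j
  · subst hij
    rw [if_pos rfl, Finset.sum_eq_single i]
    · simp
    · intro m _ hm; simp [hm]
    · simp
  · rw [if_neg hij, ← Finset.sum_subset (Finset.subset_univ ({i, j} : Finset (Fin n)))]
    · rw [Finset.sum_pair hij]
      have h1 : i ≠ j := hij
      have h2 : j ≠ i := fun h => hij h.symm
      have ha' : (0:ℝ) ≤ (a:ℝ) := by exact_mod_cast ha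
      have hb' : (0:ℝ) ≤ (b:ℝ) := by exact_mod_cast hb
      simp [h1, h2, abs_of_nonneg ha', abs_of_nonneg hb']
    · intro m _ hm
      simp only [Finset.mem_insert, Finset.mem_singleton] at hm
      push_neg at hm
      simp [hm.1, hm.2]

lemma stDist_nonneg (x y : St n k) : 0 ≤ stDist x y :=
  Finset.sum_nonneg fun _ _ => abs_nonneg _

lemma stDist_self (x : St n k) : stDist x x = 0 := by simp [stDist]

lemma stDist_endpoint {x : St n k} {i : Fin n} {a : ℤ} (ha : 0 ≤ a) (hak : a ≤ (k : ℤ))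
    (hx : x.1 = fun m => if m = i then a else 0) (m : Fin n) :
    stDist x (St.endpoint m) = if i ∈ ({m} : Finset (Fin n)) then (k : ℝ) - a else (k : ℝ) + a := by
  have he : (St.endpoint m : St n k).1 = fun j => if j = m then (k : ℤ) else 0 := rfl
  rw [stDist_eq ha (by positivity) hx he]
  have hak' : (a:ℝ) ≤ ((k:ℤ):ℝ) := by exact_mod_cast hak
  by_cases h : i = m
  · subst h
    rw [if_pos rfl, if_pos (Finset.mem_singleton_self i), abs_of_nonpos (by linarith)]
    push_cast; ring
  · rw [if_neg h, if_neg (by simpa using h)]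
    push_cast; ring

lemma phi_eq {x : St n k} {i : Fin n} {a : ℤ} (ha : 0 ≤ a) (hak : a ≤ (k : ℤ))
    (hx : x.1 = fun m => if m = i then a else 0) {A : Finset (Fin n)} (hA : A.Nonempty) :
    sInf {r : ℝ | ∃ m ∈ A, r = stDist x (St.endpoint m)} =
      if i ∈ A then (k : ℝ) - a else (k : ℝ) + a := by
  have key : ∀ m : Fin n, stDist x (St.endpoint m) = if i = m then (k : ℝ) - a else (k : ℝ) + a := by
    intro m
    rw [stDist_endpoint ha hak hx m]
    simp
  have ha' : (0:ℝ) ≤ (a:ℝ) := by exact_mod_cast ha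
  have hle : (k : ℝ) - a ≤ (k : ℝ) + a := by linarith
  by_cases hiA : i ∈ A
  · rw [if_pos hiA]
    refine IsLeast.csInf_eq ⟨⟨i, hiA, by rw [key i, if_pos rfl]⟩, ?_⟩
    rintro r ⟨m, hm, rfl⟩
    rw [key m]
    split <;> linarith
  · rw [if_neg hiA]
    have : {r : ℝ | ∃ m ∈ A, r = stDist x (St.endpoint m)} = {(k : ℝ) + a} := by
      ext r
      simp only [mem_setOf_eq, mem_singleton_iff]
      constructor
      · rintro ⟨m, hm, rfl⟩
        rw [key m, if_neg (fun h => hiA (by rw [h]; exact hm))]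
      · rintro rfl
        obtain ⟨m, hm⟩ := hA
        exact ⟨m, hm, by rw [key m, if_neg (fun h => hiA (by rw [h]; exact hm))]⟩
    rw [this, csInf_singleton]


lemma phi_lip (A : Finset (Fin n)) (hA : A.Nonempty) (x y : St n k) :
    |sInf {r : ℝ | ∃ m ∈ A, r = stDist x (St.endpoint m)} -
      sInf {r : ℝ | ∃ m ∈ A, r = stDist y (St.endpoint m)}| ≤ stDist x y := by
  obtain ⟨i, a, ha, hak, hx⟩ := st_rep x
  obtain ⟨j, b, hb, hbk, hy⟩ := st_rep y
  have ha' : (0:ℝ) ≤ (a:ℝ) := by exact_mod_cast ha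
  have hb' : (0:ℝ) ≤ (b:ℝ) := by exact_mod_cast hb
  rw [phi_eq ha hak hx hA, phi_eq hb hbk hy hA, stDist_eq ha hb hx hy]
  by_cases hij : i = j
  · subst hij
    rw [if_pos rfl]
    by_cases hi : i ∈ A
    · rw [if_pos hi, if_pos hi, show (k:ℝ)-a-((k:ℝ)-b) = -((a:ℝ)-b) by ring, abs_neg]
    · rw [if_neg hi, if_neg hi, show (k:ℝ)+a-((k:ℝ)+b) = (a:ℝ)-b by ring]
  · rw [if_neg hij]
    by_cases hi : i ∈ A <;> by_cases hj : j ∈ A <;>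
        simp only [hi, hj, if_true, if_false] <;>
      (rw [abs_le]; constructor <;> linarith)

lemma card_le {i j : Fin n} (hij : i ≠ j) :
    (Finset.univ.filter (fun A : Finset (Fin n) => (i ∈ A ↔ j ∈ A))).card ≤
      (Finset.univ.filter (fun A : Finset (Fin n) => ¬(i ∈ A ↔ j ∈ A))).card := by
  apply Finset.card_le_card_of_injOn (fun A => A ∆ ({i} : Finset (Fin n)))
  · intro A hA
    simp only [Finset.mem_coe, Finset.mem_filter, Finset.mem_univ, true_and] at hA ⊢
    have hi : i ∈ A ∆ ({i} : Finset (Fin n)) ↔ i ∉ A := by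
      simp [Finset.mem_symmDiff]
    have hj : j ∈ A ∆ ({i} : Finset (Fin n)) ↔ j ∈ A := by
      have hji : ¬ j = i := fun h => hij h.symm
      simp [Finset.mem_symmDiff, hji]
    tauto
  · intro A _ B _ h
    have := congrArg (fun S => S ∆ ({i} : Finset (Fin n))) h
    simpa [symmDiff_symmDiff_cancel_right] using this

lemma card_split (i j : Fin n) :
    (Finset.univ.filter (fun A : Finset (Fin n) => (i ∈ A ↔ j ∈ A))).card +
      (Finset.univ.filter (fun A : Finset (Fin n) => ¬(i ∈ A ↔ j ∈ A))).card = 2 ^ n := by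
  rw [Finset.card_filter_add_card_filter_not, Finset.card_univ, Fintype.card_finset,
    Fintype.card_fin]

lemma two_le_pow (hn : 1 ≤ n) : (2:ℝ) ≤ 2 ^ n := by
  calc (2:ℝ) = 2 ^ 1 := (pow_one 2).symm
  _ ≤ 2 ^ n := pow_le_pow_right₀ one_le_two hn

lemma core_sum (hn : 1 ≤ n) (x y : St n k) :
    (2:ℝ) ^ n * stDist x y ≤ 2 *
      ∑ A ∈ (Finset.univ : Finset (Finset (Fin n))).erase ∅,
        |sInf {r : ℝ | ∃ m ∈ A, r = stDist x (St.endpoint m)} -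
          sInf {r : ℝ | ∃ m ∈ A, r = stDist y (St.endpoint m)}| := by
  obtain ⟨i, a, ha, hak, hx⟩ := st_rep x
  obtain ⟨j, b, hb, hbk, hy⟩ := st_rep y
  have ha' : (0:ℝ) ≤ (a:ℝ) := by exact_mod_cast ha
  have hb' : (0:ℝ) ≤ (b:ℝ) := by exact_mod_cast hb
  have hterm : ∀ A ∈ (Finset.univ : Finset (Finset (Fin n))).erase ∅,
      |sInf {r : ℝ | ∃ m ∈ A, r = stDist x (St.endpoint m)} -
        sInf {r : ℝ | ∃ m ∈ A, r = stDist y (St.endpoint m)}| =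
      if (i ∈ A ↔ j ∈ A) then |(a:ℝ) - b| else (a:ℝ) + b := by
    intro A hA
    have hAne : A.Nonempty := Finset.nonempty_iff_ne_empty.2 (Finset.ne_of_mem_erase hA)
    rw [phi_eq ha hak hx hAne, phi_eq hb hbk hy hAne]
    by_cases hi : i ∈ A <;> by_cases hj : j ∈ A
    · rw [if_pos hi, if_pos hj, if_pos (iff_of_true hi hj),
        show (k:ℝ)-a-((k:ℝ)-b) = -((a:ℝ)-b) by ring, abs_neg]
    · rw [if_pos hi, if_neg hj, if_neg (by tauto),
        show (k:ℝ)-a-((k:ℝ)+b) = -((a:ℝ)+b) by ring, abs_neg, abs_of_nonneg (by linarith)]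
    · rw [if_neg hi, if_pos hj, if_neg (by tauto),
        show (k:ℝ)+a-((k:ℝ)-b) = (a:ℝ)+b by ring, abs_of_nonneg (by linarith)]
    · rw [if_neg hi, if_neg hj, if_pos (iff_of_false hi hj),
        show (k:ℝ)+a-((k:ℝ)+b) = (a:ℝ)-b by ring]
  rw [Finset.sum_congr rfl hterm]
  have hins : ∀ g : Finset (Fin n) → ℝ,
      g ∅ + ∑ A ∈ (Finset.univ : Finset (Finset (Fin n))).erase ∅, g A =
        ∑ A ∈ (Finset.univ : Finset (Finset (Fin n))), g A :=
    fun g => Finset.add_sum_erase _ g (Finset.mem_univ ∅)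
  have hsum := hins (fun A => if (i ∈ A ↔ j ∈ A) then |(a:ℝ) - b| else (a:ℝ) + b)
  simp only [Finset.notMem_empty, iff_self, if_true] at hsum
  have h2n := two_le_pow (n := n) hn
  by_cases hij : i = j
  · subst hij
    have hconst : ∑ A ∈ (Finset.univ : Finset (Finset (Fin n))),
        (if (i ∈ A ↔ i ∈ A) then |(a:ℝ) - b| else (a:ℝ) + b) = (2:ℝ)^n * |(a:ℝ) - b| := by
      simp [Finset.card_univ, Fintype.card_finset]
    rw [stDist_eq ha hb hx hy, if_pos rfl]
    nlinarith [abs_nonneg ((a:ℝ) - b), hsum, hconst,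
      mul_nonneg (by linarith : (0:ℝ) ≤ (2:ℝ)^n - 2) (abs_nonneg ((a:ℝ) - b))]
  · rw [stDist_eq ha hb hx hy, if_neg hij]
    set P := fun A : Finset (Fin n) => (i ∈ A ↔ j ∈ A) with hP
    have hsplit : ∑ A ∈ (Finset.univ : Finset (Finset (Fin n))),
        (if P A then |(a:ℝ) - b| else (a:ℝ) + b) =
        ((Finset.univ.filter P).card : ℝ) * |(a:ℝ) - b| +
          ((Finset.univ.filter (fun A => ¬ P A)).card : ℝ) * ((a:ℝ) + b) := by
      rw [Finset.sum_ite, Finset.sum_const, Finset.sum_const, nsmul_eq_mul, nsmul_eq_mul]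
    have hcards : ((Finset.univ.filter P).card : ℝ) +
        ((Finset.univ.filter (fun A => ¬ P A)).card : ℝ) = (2:ℝ)^n := by
      exact_mod_cast card_split i j
    have hle : ((Finset.univ.filter P).card : ℝ) ≤
        ((Finset.univ.filter (fun A => ¬ P A)).card : ℝ) := by
      exact_mod_cast card_le hij
    have hone : (1:ℝ) ≤ ((Finset.univ.filter P).card : ℝ) := by
      have : (∅ : Finset (Fin n)) ∈ Finset.univ.filter P := by
        simp [hP]
      have h1 : 1 ≤ (Finset.univ.filter P).card := Finset.card_pos.2 ⟨∅, this⟩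
      exact_mod_cast h1
    have habs : |(a:ℝ) - b| ≤ (a:ℝ) + b := by
      rw [abs_le]; constructor <;> linarith
    nlinarith [hsum, hsplit, hcards,
      mul_nonneg (by linarith : (0:ℝ) ≤ ((Finset.univ.filter P).card : ℝ) - 1)
        (abs_nonneg ((a:ℝ) - b)),
      mul_nonneg (by linarith : (0:ℝ) ≤ ((Finset.univ.filter (fun A => ¬ P A)).card : ℝ) -
        ((Finset.univ.filter P).card : ℝ)) (by linarith : (0:ℝ) ≤ (a:ℝ) + b)]


def iotaSt (x : St n k) : ℤ := ∑ j, x.1 j * ((k:ℤ)+1)^(j:ℕ)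

lemma iota_eq {x : St n k} {i : Fin n} {a : ℤ}
    (hx : x.1 = fun m => if m = i then a else 0) :
    iotaSt x = a * ((k:ℤ)+1)^(i:ℕ) := by
  unfold iotaSt
  rw [hx, Finset.sum_eq_single i]
  · simp
  · intro m _ hm; simp [hm]
  · simp

lemma aux_pow {c a b : ℤ} (ha1 : 1 ≤ a) (hak : a ≤ c - 1) (hb1 : 1 ≤ b) {p q : ℕ}
    (hpq : p < q) : a * c ^ p ≠ b * c ^ q := by
  intro h
  have hc2 : 2 ≤ c := by linarith
  have hcp : (0:ℤ) < c ^ p := pow_pos (by linarith) p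
  have h1 : c ^ q = c ^ p * c ^ (q - p) := by
    rw [← pow_add]; congr 1; omega
  have h2 : a = b * c ^ (q - p) := by
    apply mul_right_cancel₀ (ne_of_gt hcp)
    rw [h, h1]; ring
  have h3 : c ≤ c ^ (q - p) := by
    calc c = c ^ 1 := (pow_one c).symm
    _ ≤ c ^ (q - p) := pow_le_pow_right₀ (by linarith) (by omega)
  have h4 : c ^ (q - p) ≤ b * c ^ (q - p) :=
    le_mul_of_one_le_left (by positivity) hb1
  linarith

lemma iota_ne {x y : St n k} (hxy : x ≠ y) : iotaSt x ≠ iotaSt y := by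
  obtain ⟨i, a, ha, hak, hx⟩ := st_rep x
  obtain ⟨j, b, hb, hbk, hy⟩ := st_rep y
  rw [iota_eq hx, iota_eq hy]
  intro h
  apply hxy
  apply Subtype.ext
  rw [hx, hy]
  have hpi : (0:ℤ) < ((k:ℤ)+1)^(i:ℕ) := pow_pos (by linarith) _
  have hpj : (0:ℤ) < ((k:ℤ)+1)^(j:ℕ) := pow_pos (by linarith) _
  by_cases ha0 : a = 0
  · have hb0 : b = 0 := by
      rw [ha0, zero_mul] at h
      rcases mul_eq_zero.mp h.symm with hb' | hp'
      · exact hb'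
      · exact absurd hp' (ne_of_gt hpj)
    rw [ha0, hb0]
    funext m; simp
  · by_cases hb0 : b = 0
    · exfalso
      rw [hb0, zero_mul] at h
      rcases mul_eq_zero.mp h with ha' | hp'
      · exact ha0 ha'
      · exact absurd hp' (ne_of_gt hpi)
    · have ha1 : 1 ≤ a := by omega
      have hb1 : 1 ≤ b := by omega
      rcases lt_trichotomy ((i:ℕ)) ((j:ℕ)) with hlt | heq | hgt
      · exact absurd h (aux_pow ha1 (by omega) hb1 hlt)
      · have hij : i = j := Fin.ext heq
        subst hij
        have hab : a = b := mul_right_cancel₀ (ne_of_gt hpi) h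
        rw [hab]
      · exact absurd h.symm (aux_pow hb1 (by omega) ha1 hgt)

lemma one_le_stDist {x y : St n k} (hxy : x ≠ y) : 1 ≤ stDist x y := by
  obtain ⟨i, a, ha, hak, hx⟩ := st_rep x
  obtain ⟨j, b, hb, hbk, hy⟩ := st_rep y
  rw [stDist_eq ha hb hx hy]
  split_ifs with hij
  · subst hij
    have hab : a ≠ b := by
      intro h
      exact hxy (Subtype.ext (by rw [hx, hy, h]))
    have h1 : (1:ℤ) ≤ |a - b| := Int.one_le_abs (sub_ne_zero.2 hab)
    exact_mod_cast h1
  · have hnb : ¬(a = 0 ∧ b = 0) := by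
      rintro ⟨rfl, rfl⟩
      apply hxy
      apply Subtype.ext
      rw [hx, hy]
      funext m; simp
    have h1 : (1:ℤ) ≤ a + b := by omega
    exact_mod_cast h1

def psiSt (n k : ℕ) (x : St n k) : ℝ := (iotaSt x : ℝ) / ((k:ℝ)+1)^(n+1)

lemma iota_bounds (x : St n k) : 0 ≤ iotaSt x ∧ iotaSt x ≤ ((k:ℤ)+1)^(n+1) := by
  obtain ⟨i, a, ha, hak, hx⟩ := st_rep x
  rw [iota_eq hx]
  have hp : (0:ℤ) ≤ ((k:ℤ)+1)^(i:ℕ) := pow_nonneg (by linarith) _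
  constructor
  · exact mul_nonneg ha hp
  · calc a * ((k:ℤ)+1)^(i:ℕ) ≤ ((k:ℤ)+1) * ((k:ℤ)+1)^(i:ℕ) :=
        mul_le_mul_of_nonneg_right (by linarith) hp
    _ = ((k:ℤ)+1)^((i:ℕ)+1) := (pow_succ' _ _).symm
    _ ≤ ((k:ℤ)+1)^(n+1) := pow_le_pow_right₀ (by linarith) (by omega)

lemma psi_bounds (x : St n k) : 0 ≤ psiSt n k x ∧ psiSt n k x ≤ 1 := by
  have hD : (0:ℝ) < ((k:ℝ)+1)^(n+1) := by positivity
  obtain ⟨h1, h2⟩ := iota_bounds x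
  unfold psiSt
  constructor
  · exact div_nonneg (by exact_mod_cast h1) (le_of_lt hD)
  · rw [div_le_one hD]
    calc (iotaSt x : ℝ) ≤ ((((k:ℤ)+1)^(n+1) : ℤ) : ℝ) := by exact_mod_cast h2
    _ = ((k:ℝ)+1)^(n+1) := by push_cast; ring

lemma psi_diff_le_one (x y : St n k) : |psiSt n k x - psiSt n k y| ≤ 1 := by
  obtain ⟨h1, h2⟩ := psi_bounds x
  obtain ⟨h3, h4⟩ := psi_bounds y
  rw [abs_le]; constructor <;> linarith

lemma psi_ne {x y : St n k} (hxy : x ≠ y) : psiSt n k x ≠ psiSt n k y := by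
  have hD : ((k:ℝ)+1)^(n+1) ≠ 0 := by positivity
  intro h
  apply iota_ne hxy
  have h2 : (iotaSt x : ℝ) = (iotaSt y : ℝ) := by
    have := congrArg (fun r => r * ((k:ℝ)+1)^(n+1)) h
    simpa [psiSt, div_mul_cancel₀, hD] using this
  exact_mod_cast h2

lemma psi_lip (x y : St n k) : |psiSt n k x - psiSt n k y| ≤ stDist x y := by
  by_cases hxy : x = y
  · subst hxy
    rw [sub_self, abs_zero, stDist_self]
  · exact (psi_diff_le_one x y).trans (one_le_stDist hxy)

lemma phi_int {A : Finset (Fin n)} (hA : A.Nonempty) (x : St n k) :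
    ∃ z : ℤ, sInf {r : ℝ | ∃ m ∈ A, r = stDist x (St.endpoint m)} = (z:ℝ) := by
  obtain ⟨i, a, ha, hak, hx⟩ := st_rep x
  rw [phi_eq ha hak hx hA]
  split_ifs
  · exact ⟨(k:ℤ) - a, by push_cast; ring⟩
  · exact ⟨(k:ℤ) + a, by push_cast; ring⟩

lemma card_erase_empty :
    ((Finset.univ : Finset (Finset (Fin n))).erase ∅).card = 2 ^ n - 1 := by
  rw [Finset.card_erase_of_mem (Finset.mem_univ _), Finset.card_univ, Fintype.card_finset,
    Fintype.card_fin]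


def deltaSt (n : ℕ) : ℝ := 1 / 2^(n+2)

def PhiSt (n k : ℕ) (A : Finset (Fin n)) (x : St n k) : ℝ :=
  sInf {r : ℝ | ∃ m ∈ A, r = stDist x (St.endpoint m)}

def FSt (n k : ℕ) (A : Finset (Fin n)) (x : St n k) : ℝ :=
  (1 - deltaSt n) * PhiSt n k A x + deltaSt n * psiSt n k x

lemma delta_pos : 0 < deltaSt n := by unfold deltaSt; positivity

lemma delta_le (hn : 1 ≤ n) : deltaSt n ≤ 1/8 := by
  unfold deltaSt
  have h8 : (8:ℝ) ≤ 2^(n+2) := by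
    calc (8:ℝ) = 2^3 := by norm_num
    _ ≤ 2^(n+2) := pow_le_pow_right₀ one_le_two (by omega)
  rw [div_le_div_iff₀ (by positivity) (by norm_num)]
  linarith

lemma delta_mul : deltaSt n * (2:ℝ)^n = 1/4 := by
  unfold deltaSt
  have h2 : (2:ℝ)^(n+2) = 2^n * 4 := by rw [pow_add]; norm_num
  rw [h2]
  field_simp

lemma FSt_inj {A : Finset (Fin n)} (hA : A.Nonempty) (hn : 1 ≤ n) :
    Function.Injective (FSt n k A) := by
  intro x y hxyF
  by_contra hxy
  obtain ⟨zx, hzx⟩ := phi_int hA x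
  obtain ⟨zy, hzy⟩ := phi_int hA y
  have hzx' : PhiSt n k A x = (zx:ℝ) := hzx
  have hzy' : PhiSt n k A y = (zy:ℝ) := hzy
  have hψ := psi_ne (n:=n) (k:=k) hxy
  have hδpos : 0 < deltaSt n := delta_pos
  have hδ8 := delta_le (n:=n) hn
  have hFeq : (1 - deltaSt n) * PhiSt n k A x + deltaSt n * psiSt n k x =
      (1 - deltaSt n) * PhiSt n k A y + deltaSt n * psiSt n k y := hxyF
  have heq : (1 - deltaSt n) * ((zx:ℝ) - zy) =
      deltaSt n * (psiSt n k y - psiSt n k x) := by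
    rw [← hzx', ← hzy']
    linarith [hFeq]
  by_cases hz : zx = zy
  · subst hz
    have h0 : deltaSt n * (psiSt n k y - psiSt n k x) = 0 := by rw [← heq]; ring
    rcases mul_eq_zero.mp h0 with h' | h'
    · exact absurd h' (ne_of_gt hδpos)
    · exact hψ (by linarith)
  · have h1 : (1:ℝ) ≤ |(zx:ℝ) - zy| := by
      exact_mod_cast Int.one_le_abs (sub_ne_zero.2 hz)
    have h2 : |(1 - deltaSt n) * ((zx:ℝ) - zy)| = (1 - deltaSt n) * |(zx:ℝ) - zy| := by
      rw [abs_mul, abs_of_nonneg (by linarith)]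
    have h3 : |deltaSt n * (psiSt n k y - psiSt n k x)| ≤ deltaSt n := by
      rw [abs_mul, abs_of_nonneg (le_of_lt hδpos)]
      calc deltaSt n * |psiSt n k y - psiSt n k x| ≤ deltaSt n * 1 :=
        mul_le_mul_of_nonneg_left (psi_diff_le_one y x) (le_of_lt hδpos)
      _ = deltaSt n := mul_one _
    have h4 : (1 - deltaSt n) * 1 ≤ (1 - deltaSt n) * |(zx:ℝ) - zy| :=
      mul_le_mul_of_nonneg_left h1 (by linarith)
    rw [← h2, heq] at h4
    linarith [h3, h4]

lemma FSt_lip {A : Finset (Fin n)} (hA : A.Nonempty) (hn : 1 ≤ n) (x y : St n k) :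
    |FSt n k A x - FSt n k A y| ≤ stDist x y := by
  have h1 : |PhiSt n k A x - PhiSt n k A y| ≤ stDist x y := phi_lip A hA x y
  have h2 := psi_lip x y
  have hδpos : 0 < deltaSt n := delta_pos
  have hδ8 := delta_le (n:=n) hn
  have hdiff : FSt n k A x - FSt n k A y =
      (1 - deltaSt n) * (PhiSt n k A x - PhiSt n k A y) +
        deltaSt n * (psiSt n k x - psiSt n k y) := by
    unfold FSt; ring
  rw [hdiff]
  calc |(1 - deltaSt n) * (PhiSt n k A x - PhiSt n k A y) +
        deltaSt n * (psiSt n k x - psiSt n k y)|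
      ≤ |(1 - deltaSt n) * (PhiSt n k A x - PhiSt n k A y)| +
        |deltaSt n * (psiSt n k x - psiSt n k y)| := abs_add_le _ _
    _ = (1 - deltaSt n) * |PhiSt n k A x - PhiSt n k A y| +
        deltaSt n * |psiSt n k x - psiSt n k y| := by
        rw [abs_mul, abs_mul, abs_of_nonneg (by linarith : (0:ℝ) ≤ 1 - deltaSt n),
          abs_of_nonneg (le_of_lt hδpos)]
    _ ≤ (1 - deltaSt n) * stDist x y + deltaSt n * stDist x y := by
        gcongr <;> linarith
    _ = stDist x y := by ring

lemma main3 (hn : 1 ≤ n) (x y : St n k) :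
    stDist x y / 2 ≤ (((2^n - 1 : ℕ)):ℝ)⁻¹ *
      ∑ A ∈ (Finset.univ : Finset (Finset (Fin n))).erase ∅,
        |FSt n k A x - FSt n k A y| := by
  have hd := stDist_nonneg x y
  have hδpos : 0 < deltaSt n := delta_pos
  have hδ8 := delta_le (n:=n) hn
  have hδP := delta_mul (n:=n)
  have hP2 : (2:ℝ) ≤ 2^n := two_le_pow hn
  have h2n : 2 ≤ 2^n := by
    calc 2 = 2^1 := (pow_one 2).symm
    _ ≤ 2^n := Nat.pow_le_pow_right (by norm_num) hn
  have hM : (((2^n - 1 : ℕ)):ℝ) = (2:ℝ)^n - 1 := by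
    push_cast [Nat.cast_sub (by omega : 1 ≤ 2^n)]
    ring
  have hMpos : (0:ℝ) < (((2^n - 1 : ℕ)):ℝ) := by rw [hM]; linarith
  set S := ∑ A ∈ (Finset.univ : Finset (Finset (Fin n))).erase ∅,
      |PhiSt n k A x - PhiSt n k A y| with hS
  set T := ∑ A ∈ (Finset.univ : Finset (Finset (Fin n))).erase ∅,
      |FSt n k A x - FSt n k A y| with hT
  have hcore : (2:ℝ)^n * stDist x y ≤ 2 * S := core_sum hn x y
  have hS0 : 0 ≤ S := Finset.sum_nonneg fun _ _ => abs_nonneg _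
  have hTbd : (1 - deltaSt n) * S -
      (((2^n - 1 : ℕ)):ℝ) * (deltaSt n * stDist x y) ≤ T := by
    have h1 : (((2^n - 1 : ℕ)):ℝ) * (deltaSt n * stDist x y) =
        ∑ _A ∈ (Finset.univ : Finset (Finset (Fin n))).erase ∅,
          deltaSt n * stDist x y := by
      rw [Finset.sum_const, card_erase_empty, nsmul_eq_mul]
    rw [hS, hT, Finset.mul_sum, h1, ← Finset.sum_sub_distrib]
    apply Finset.sum_le_sum
    intro A _
    have hu : |(1 - deltaSt n) * (PhiSt n k A x - PhiSt n k A y)| ≤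
        |FSt n k A x - FSt n k A y| + |deltaSt n * (psiSt n k x - psiSt n k y)| := by
      have he : (1 - deltaSt n) * (PhiSt n k A x - PhiSt n k A y) =
          (FSt n k A x - FSt n k A y) - deltaSt n * (psiSt n k x - psiSt n k y) := by
        unfold FSt; ring
      rw [he]
      exact abs_sub _ _
    have h2 : |(1 - deltaSt n) * (PhiSt n k A x - PhiSt n k A y)| =
        (1 - deltaSt n) * |PhiSt n k A x - PhiSt n k A y| := by
      rw [abs_mul, abs_of_nonneg (by linarith : (0:ℝ) ≤ 1 - deltaSt n)]
    have h3 : |deltaSt n * (psiSt n k x - psiSt n k y)| ≤ deltaSt n * stDist x y := by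
      rw [abs_mul, abs_of_nonneg hδpos.le]
      exact mul_le_mul_of_nonneg_left (psi_lip x y) hδpos.le
    linarith [hu, h2, h3]
  have hδPd : deltaSt n * (2:ℝ)^n * stDist x y = 1/4 * stDist x y := by rw [hδP]
  have hMδd : (((2^n - 1 : ℕ)):ℝ) * (deltaSt n * stDist x y) =
      ((2:ℝ)^n - 1) * (deltaSt n * stDist x y) := by rw [hM]
  have hMd : stDist x y * (((2^n - 1 : ℕ)):ℝ) = stDist x y * ((2:ℝ)^n - 1) := by rw [hM]
  have hF1 : (1 - deltaSt n) * ((2:ℝ)^n * stDist x y) ≤ (1 - deltaSt n) * (2 * S) :=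
    mul_le_mul_of_nonneg_left hcore (by linarith)
  have hδd : deltaSt n * stDist x y ≤ 1/8 * stDist x y :=
    mul_le_mul_of_nonneg_right hδ8 hd
  have hδd0 : 0 ≤ deltaSt n * stDist x y := mul_nonneg hδpos.le hd
  rw [← div_eq_inv_mul, div_le_div_iff₀ two_pos hMpos]
  nlinarith [hTbd, hF1, hδPd, hMδd, hMd, hδd, hδd0, hd]


end Statement14Aux

/-- For all `n ≥ 1` and `k`, `c_1^{2^n - 1, dom}(St_{n,k}, d) ≤ 2`.
More precisely, for each nonempty `A ⊆ {1,…,n}` the Fréchet map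
`φ_A x = min {d(x, k eᵢ) : i ∈ A}` is 1-Lipschitz, and for all `x, y ∈ St_{n,k}`,
`(1/(2^n - 1)) ∑_{∅ ≠ A} |φ_A x - φ_A y| ≥ d(x,y)/2`. -/
theorem statement14 (n k : ℕ) (hn : 1 ≤ n) :
    (∀ A : Finset (Fin n), A.Nonempty → ∀ x y : St n k,
      |sInf {r : ℝ | ∃ i ∈ A, r = stDist x (St.endpoint i)} -
        sInf {r : ℝ | ∃ i ∈ A, r = stDist y (St.endpoint i)}| ≤ stDist x y) ∧
    (∀ x y : St n k,
      stDist x y / 2 ≤ (1 / ((2 : ℝ) ^ n - 1)) *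
        ∑ A ∈ (Finset.univ : Finset (Finset (Fin n))).erase ∅,
          |sInf {r : ℝ | ∃ i ∈ A, r = stDist x (St.endpoint i)} -
            sInf {r : ℝ | ∃ i ∈ A, r = stDist y (St.endpoint i)}|) ∧
    c1dom (stDist : St n k → St n k → ℝ) (2 ^ n - 1) ≤ 2 := by
  have hP2 : (2:ℝ) ≤ 2^n := two_le_pow hn
  have h2n : 2 ≤ 2^n := by
    calc 2 = 2^1 := (pow_one 2).symm
    _ ≤ 2^n := Nat.pow_le_pow_right (by norm_num) hn
  refine ⟨fun A hA x y => phi_lip A hA x y, ?_, ?_⟩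
  · intro x y
    have hc := core_sum hn x y
    have hd := stDist_nonneg x y
    have hPm : (0:ℝ) < (2:ℝ)^n - 1 := by linarith
    rw [one_div_mul_eq_div, div_le_div_iff₀ two_pos hPm]
    nlinarith [hc, hd]
  · have hcard : ((Finset.univ : Finset (Finset (Fin n))).erase ∅).card = 2^n - 1 :=
      card_erase_empty
    set e := Finset.equivFinOfCardEq hcard with he
    apply sInf_le
    refine ⟨2, two_pos, by norm_num,
      fun t => FSt n k ((e.symm t : ((Finset.univ : Finset (Finset (Fin n))).erase ∅)) :
        Finset (Fin n)),
      fun _ => (((2^n - 1 : ℕ)):ℝ)⁻¹, ?_, ?_, ?_, ?_, ?_⟩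
    · intro t
      have hne := Finset.ne_of_mem_erase (e.symm t).2
      exact FSt_inj (Finset.nonempty_iff_ne_empty.2 hne) hn
    · intro t x y
      have hne := Finset.ne_of_mem_erase (e.symm t).2
      exact FSt_lip (Finset.nonempty_iff_ne_empty.2 hne) hn x y
    · intro _
      positivity
    · rw [Finset.sum_const, Finset.card_univ, Fintype.card_fin, nsmul_eq_mul]
      rw [mul_inv_cancel₀]
      exact Nat.cast_ne_zero.2 (by omega)
    · intro x y
      have hre : ∑ t : Fin (2^n - 1), (((2^n - 1 : ℕ)):ℝ)⁻¹ *
          |FSt n k ((e.symm t : ((Finset.univ : Finset (Finset (Fin n))).erase ∅)) :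
            Finset (Fin n)) x -
           FSt n k ((e.symm t : ((Finset.univ : Finset (Finset (Fin n))).erase ∅)) :
            Finset (Fin n)) y| =
          (((2^n - 1 : ℕ)):ℝ)⁻¹ * ∑ A ∈ (Finset.univ : Finset (Finset (Fin n))).erase ∅,
            |FSt n k A x - FSt n k A y| := by
        rw [← Finset.mul_sum]
        congr 1
        rw [Equiv.sum_comp e.symm
          (fun u : ((Finset.univ : Finset (Finset (Fin n))).erase ∅) =>
            |FSt n k (u : Finset (Fin n)) x - FSt n k (u : Finset (Fin n)) y|)]
        exact Finset.sum_coe_sort _ (fun A => |FSt n k A x - FSt n k A y|)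
      rw [hre]
      exact main3 hn x y

end Lamplighter
end
end

section
/- For all k,n ∈ ℕ with k ≤ n, the two-dimensional rectangular grid G_{k,n} = ([0,k]∩ℤ) × ([0,n]∩ℤ), equipped with the ℓ1 metric, is (k+5)-TSP-efficient. -/
/-!
Let `S = {x, y} ∪ (A Δ B)` and let `[x₀, x₁] × [y₀, y₁]` be its bounding box, of widths
`w₁ = x₁ - x₀ ≤ min k D` and `w₂ = y₁ - y₀ ≤ D`, where `D = TSCP((A,x),(B,y))` (each width is
realised by two points of `S`). Walk from `x` to the corner of the box nearest to it, which costs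
at most `(w₁ + w₂) / 2`, sweep the whole box column by column in a boustrophedon, which takes
`(w₁ + 1)(w₂ + 1) - 1` unit steps, and finally walk to `y`, at most `w₁ + w₂`. The total
`w₁ w₂ + 5 (w₁ + w₂) / 2` is at most `(k + 5) D`.
-/

open Metric Set
open scoped Classical ENNReal NNReal

noncomputable section

namespace Lamplighter

variable {X Y Z : Type*}

section Path

variable {X : Type*} (d : X → X → ℝ)

theorem pathLength_nonneg (hd : ∀ a b, 0 ≤ d a b) : ∀ l : List X, 0 ≤ pathLength d l
  | [] | [_] => le_rfl
  | x :: y :: l => add_nonneg (hd x y) (pathLength_nonneg hd (y :: l))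

theorem pathLength_cons {l : List X} (hl : l ≠ []) (x : X) :
    pathLength d (x :: l) = d x (l.head hl) + pathLength d l := by
  cases l with
  | nil => contradiction
  | cons y l => rfl

theorem pathLength_append_singleton : ∀ {l : List X} (hl : l ≠ []) (y : X),
    pathLength d (l ++ [y]) = pathLength d l + d (l.getLast hl) y
  | [x], _, y => by simp [pathLength]
  | x :: z :: l, _, y => by
    have ih := pathLength_append_singleton (l := z :: l) (List.cons_ne_nil _ _) y
    simp only [List.cons_append, pathLength, List.getLast_cons_cons] at ih ⊢
    rw [ih, add_assoc]

theorem pathLength_map_range (f : ℕ → X) : ∀ m : ℕ,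
    pathLength d ((List.range (m + 1)).map f) = ∑ i ∈ Finset.range m, d (f i) (f (i + 1))
  | 0 => rfl
  | m + 1 => by
    rw [List.range_succ, List.map_append, List.map_singleton,
      pathLength_append_singleton d (by simp), pathLength_map_range f m, Finset.sum_range_succ]
    simp [List.getLast_map, List.getLast_range]

theorem TSP_le_pathLength (hd : ∀ a b, 0 ≤ d a b) {p q : Lamp X} {l : List X}
    (hhead : l.head? = some p.2) (hlast : l.getLast? = some q.2)
    (hcover : ∀ a ∈ sd p q, a ∈ l) : TSP d p q ≤ pathLength d l :=
  csInf_le ⟨0, by rintro _ ⟨l, -, -, -, rfl⟩; exact pathLength_nonneg d hd l⟩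
    ⟨l, hhead, hlast, hcover, rfl⟩

theorem le_toReal_ediamD {A : Set X} (hA : A.Finite) {u v : X} (hu : u ∈ A) (hv : v ∈ A) :
    d u v ≤ (ediamD d A).toReal := by
  obtain ⟨M, hM⟩ := ((hA.prod hA).image fun z => d z.1 z.2).bddAbove
  have hle : ediamD d A ≤ ENNReal.ofReal M :=
    iSup₂_le fun x hx => iSup₂_le fun y hy =>
      ENNReal.ofReal_le_ofReal (hM ⟨(x, y), ⟨hx, hy⟩, rfl⟩)
  have hmem : ENNReal.ofReal (d u v) ≤ ediamD d A :=
    le_iSup₂_of_le u hu (le_iSup₂_of_le v hv le_rfl)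
  exact (ENNReal.ofReal_le_iff_le_toReal
    (ne_top_of_le_ne_top ENNReal.ofReal_ne_top hle)).1 hmem

theorem finite_sd (p q : Lamp X) : (sd p q).Finite :=
  p.1.finite_toSet.sdiff.union q.1.finite_toSet.sdiff

theorem le_TSCP {p q : Lamp X} {u v : X} (hu : u ∈ {p.2, q.2} ∪ sd p q)
    (hv : v ∈ {p.2, q.2} ∪ sd p q) : d u v ≤ TSCP d p q :=
  le_toReal_ediamD d ((Set.toFinite _).union (finite_sd p q)) hu hv

end Path

section Snake

-- Cell `i` of the boustrophedon through `[0, w] × [0, h]` running up column `0`, down column `1`,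
-- and so on; the `min` only keeps the indices past the last cell inside the box.
def snake (w h i : ℕ) : ℕ × ℕ :=
  (min (i / (h + 1)) w, if Even (i / (h + 1)) then i % (h + 1) else h - i % (h + 1))

variable {w h : ℕ}

theorem snake_fst_le (i : ℕ) : (snake w h i).1 ≤ w := min_le_right _ _

theorem snake_snd_le (i : ℕ) : (snake w h i).2 ≤ h := by
  have := Nat.mod_lt i (by omega : 0 < h + 1)
  simp only [snake]
  split_ifs <;> omega

@[simp]
theorem snake_zero : snake w h 0 = (0, 0) := by
  simp [snake]

theorem snake_succ {i : ℕ} (hi : i + 1 < (w + 1) * (h + 1)) :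
    |((snake w h i).1 : ℤ) - (snake w h (i + 1)).1| +
      |((snake w h i).2 : ℤ) - (snake w h (i + 1)).2| = 1 := by
  have h0 : 0 < h + 1 := by omega
  obtain ⟨q, r, hr, rfl⟩ : ∃ q r, r < h + 1 ∧ i = r + (h + 1) * q :=
    ⟨i / (h + 1), i % (h + 1), Nat.mod_lt i h0, (Nat.mod_add_div i (h + 1)).symm⟩
  have hq : q ≤ w := by nlinarith
  have hqw : q = w → r < h := by rintro rfl; nlinarith
  obtain ⟨hq', hr'⟩ :=
    (Nat.div_mod_unique h0).2 (⟨rfl, hr⟩ : r + (h + 1) * q = _ ∧ r < h + 1)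
  simp only [snake, hq', hr']
  rcases Nat.lt_or_ge r h with hrh | hrh
  · -- `i + 1` is the next cell of column `q`
    obtain ⟨hq'', hr''⟩ := (Nat.div_mod_unique h0).2
      (⟨by ring, by omega⟩ : r + 1 + (h + 1) * q = r + (h + 1) * q + 1 ∧ r + 1 < h + 1)
    rw [hq'', hr'', abs_eq_max_neg, abs_eq_max_neg]
    split_ifs <;> omega
  · -- `i + 1` is the first cell of column `q + 1`, traversed in the opposite direction
    obtain ⟨hq'', hr''⟩ := (Nat.div_mod_unique h0).2
      (⟨by rw [Nat.mul_succ]; omega, h0⟩ :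
        0 + (h + 1) * (q + 1) = r + (h + 1) * q + 1 ∧ 0 < h + 1)
    have hq1 : q + 1 ≤ w := by omega
    rw [hq'', hr'', min_eq_left hq, min_eq_left hq1, abs_eq_max_neg, abs_eq_max_neg]
    simp only [Nat.even_add_one]
    split_ifs <;> omega

theorem exists_snake_eq {u v : ℕ} (hu : u ≤ w) (hv : v ≤ h) :
    ∃ i < (w + 1) * (h + 1), snake w h i = (u, v) := by
  set r := if Even u then v else h - v
  have hr : r < h + 1 := by simp only [r]; split_ifs <;> omega
  obtain ⟨hq, hr'⟩ := (Nat.div_mod_unique (by omega : 0 < h + 1)).2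
    (⟨rfl, hr⟩ : r + (h + 1) * u = _ ∧ r < h + 1)
  refine ⟨r + (h + 1) * u, by nlinarith, ?_⟩
  simp only [snake, hq, hr', r, Prod.mk.injEq, min_eq_left hu, true_and]
  split_ifs <;> omega

end Snake

section Orient

-- The two isometries of `[0, hi - lo]` onto `[lo, hi]`; `b` picks the end where the snake starts.
def orient (lo hi : ℤ) (b : Bool) (u : ℕ) : ℤ := bif b then hi - u else lo + u

variable {lo hi : ℤ}

theorem orient_mem_Icc (b : Bool) {u : ℕ} (hu : (u : ℤ) ≤ hi - lo) :
    orient lo hi b u ∈ Icc lo hi := by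
  cases b <;> simp only [orient, cond_false, cond_true, mem_Icc] <;> omega

theorem abs_orient_sub_orient (b : Bool) (u v : ℕ) :
    |orient lo hi b u - orient lo hi b v| = |(u : ℤ) - v| := by
  cases b
  · simp only [orient, cond_false]; congr 1; ring
  · simp only [orient, cond_true]; rw [abs_sub_comm]; congr 1; ring

theorem exists_orient_eq (b : Bool) {z : ℤ} (hz : z ∈ Icc lo hi) :
    ∃ u : ℕ, (u : ℤ) ≤ hi - lo ∧ orient lo hi b u = z := by
  rw [mem_Icc] at hz
  cases b
  · exact ⟨(z - lo).toNat, by omega, by simp only [orient, cond_false]; omega⟩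
  · exact ⟨(hi - z).toNat, by omega, by simp only [orient, cond_true]; omega⟩

theorem exists_two_mul_abs_sub_orient_zero_le {z : ℤ} (hz : z ∈ Icc lo hi) :
    ∃ b : Bool, 2 * |z - orient lo hi b 0| ≤ hi - lo := by
  rw [mem_Icc] at hz
  rcases le_or_gt (2 * z) (lo + hi) with h | h
  · exact ⟨false, by simp only [orient, cond_false]; rw [abs_eq_max_neg]; omega⟩
  · exact ⟨true, by simp only [orient, cond_true]; rw [abs_eq_max_neg]; omega⟩

end Orient

section Grid

variable {k n : ℕ}

theorem grid2Dist_nonneg (x y : Grid2 k n) : 0 ≤ grid2Dist x y :=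
  add_nonneg (abs_nonneg _) (abs_nonneg _)

theorem grid2Dist_eq (x y : Grid2 k n) :
    grid2Dist x y = ((|x.1.1 - y.1.1| + |x.1.2 - y.1.2| : ℤ) : ℝ) := by
  simp [grid2Dist]

theorem sub_fst_le_grid2Dist (x y : Grid2 k n) :
    ((y.1.1 - x.1.1 : ℤ) : ℝ) ≤ grid2Dist x y := by
  rw [grid2Dist_eq, Int.cast_le, abs_eq_max_neg, abs_eq_max_neg]
  omega

theorem sub_snd_le_grid2Dist (x y : Grid2 k n) :
    ((y.1.2 - x.1.2 : ℤ) : ℝ) ≤ grid2Dist x y := by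
  rw [grid2Dist_eq, Int.cast_le, abs_eq_max_neg, abs_eq_max_neg]
  omega

theorem grid2Dist_le_of_mem_Icc {lo hi : ℤ × ℤ} {x y : Grid2 k n} (hx : x.1 ∈ Icc lo hi)
    (hy : y.1 ∈ Icc lo hi) : grid2Dist x y ≤ ((hi.1 - lo.1 + (hi.2 - lo.2) : ℤ) : ℝ) := by
  simp only [mem_Icc, Prod.le_def] at hx hy
  rw [grid2Dist_eq, Int.cast_le, abs_eq_max_neg, abs_eq_max_neg]
  omega

theorem exists_snake_in_box {lo hi : ℤ × ℤ} (hlo : 0 ≤ lo) (hhi : hi ≤ ((k : ℤ), (n : ℤ)))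
    {x : Grid2 k n} (hx : x.1 ∈ Icc lo hi) :
    ∃ (N : ℕ) (f : ℕ → Grid2 k n), (N : ℤ) = (hi.1 - lo.1 + 1) * (hi.2 - lo.2 + 1) ∧
      (∀ i, (f i).1 ∈ Icc lo hi) ∧ (∀ z : Grid2 k n, z.1 ∈ Icc lo hi → ∃ i < N, f i = z) ∧
      (∀ i, i + 1 < N → grid2Dist (f i) (f (i + 1)) = 1) ∧
      2 * grid2Dist x (f 0) ≤ ((hi.1 - lo.1 + (hi.2 - lo.2) : ℤ) : ℝ) := by
  have hxbox := hx
  simp only [mem_Icc, Prod.le_def, Prod.fst_zero, Prod.snd_zero] at hxbox hlo hhi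
  obtain ⟨w₁, hw₁⟩ : ∃ w₁ : ℕ, (w₁ : ℤ) = hi.1 - lo.1 := ⟨(hi.1 - lo.1).toNat, by omega⟩
  obtain ⟨w₂, hw₂⟩ : ∃ w₂ : ℕ, (w₂ : ℤ) = hi.2 - lo.2 := ⟨(hi.2 - lo.2).toNat, by omega⟩
  obtain ⟨b₁, hb₁⟩ := exists_two_mul_abs_sub_orient_zero_le (mem_Icc.2 ⟨hxbox.1.1, hxbox.2.1⟩)
  obtain ⟨b₂, hb₂⟩ := exists_two_mul_abs_sub_orient_zero_le (mem_Icc.2 ⟨hxbox.1.2, hxbox.2.2⟩)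
  let g : ℕ → ℤ × ℤ := fun i =>
    (orient lo.1 hi.1 b₁ (snake w₁ w₂ i).1, orient lo.2 hi.2 b₂ (snake w₁ w₂ i).2)
  have hg : ∀ i, g i ∈ Icc lo hi := fun i => by
    have h₁ := orient_mem_Icc (lo := lo.1) (hi := hi.1) b₁ (u := (snake w₁ w₂ i).1)
      (by have := snake_fst_le (w := w₁) (h := w₂) i; omega)
    have h₂ := orient_mem_Icc (lo := lo.2) (hi := hi.2) b₂ (u := (snake w₁ w₂ i).2)
      (by have := snake_snd_le (w := w₁) (h := w₂) i; omega)
    exact ⟨⟨h₁.1, h₂.1⟩, h₁.2, h₂.2⟩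
  let f : ℕ → Grid2 k n := fun i => ⟨g i, by
    have := hg i; simp only [mem_Icc, Prod.le_def] at this; omega⟩
  refine ⟨(w₁ + 1) * (w₂ + 1), f, by push_cast; rw [hw₁, hw₂], hg, ?_, ?_, ?_⟩
  · rintro ⟨⟨z₁, z₂⟩, hz⟩ hzbox
    simp only [mem_Icc, Prod.le_def] at hzbox
    obtain ⟨u, hu, hgu⟩ := exists_orient_eq (lo := lo.1) (hi := hi.1) b₁ (z := z₁)
      ⟨hzbox.1.1, hzbox.2.1⟩
    obtain ⟨v, hv, hgv⟩ := exists_orient_eq (lo := lo.2) (hi := hi.2) b₂ (z := z₂)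
      ⟨hzbox.1.2, hzbox.2.2⟩
    obtain ⟨i, hi, hsnake⟩ := exists_snake_eq (w := w₁) (h := w₂) (u := u) (v := v)
      (by omega) (by omega)
    exact ⟨i, hi, Subtype.ext (by simp [f, g, hsnake, hgu, hgv])⟩
  · intro i hi
    rw [grid2Dist_eq]
    simp only [f, g, abs_orient_sub_orient]
    exact_mod_cast snake_succ hi
  · rw [grid2Dist_eq]
    simp only [f, g, snake_zero]
    have hcorner : 2 * (|x.1.1 - orient lo.1 hi.1 b₁ 0| + |x.1.2 - orient lo.2 hi.2 b₂ 0|) ≤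
        hi.1 - lo.1 + (hi.2 - lo.2) := by omega
    exact_mod_cast hcorner

theorem exists_route_covering_box {lo hi : ℤ × ℤ} (hlo : 0 ≤ lo)
    (hhi : hi ≤ ((k : ℤ), (n : ℤ))) {x y : Grid2 k n} (hx : x.1 ∈ Icc lo hi)
    (hy : y.1 ∈ Icc lo hi) :
    ∃ l : List (Grid2 k n), l.head? = some x ∧ l.getLast? = some y ∧
      (∀ z : Grid2 k n, z.1 ∈ Icc lo hi → z ∈ l) ∧
      pathLength grid2Dist l ≤ ((hi.1 - lo.1 : ℤ) : ℝ) * ((hi.2 - lo.2 : ℤ) : ℝ) +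
        5 / 2 * (((hi.1 - lo.1 : ℤ) : ℝ) + ((hi.2 - lo.2 : ℤ) : ℝ)) := by
  obtain ⟨N, f, hN, hfbox, hfcover, hfstep, hfenter⟩ := exists_snake_in_box hlo hhi hx
  have hxbox := hx
  simp only [mem_Icc, Prod.le_def] at hxbox
  have hNpos : (0 : ℤ) < N := hN ▸ mul_pos (by omega) (by omega)
  obtain ⟨m, rfl⟩ : ∃ m, N = m + 1 := ⟨N - 1, by omega⟩
  have hsnake : pathLength grid2Dist ((List.range (m + 1)).map f) = m := by
    rw [pathLength_map_range, Finset.sum_congr rfl fun i hi => hfstep i (by simpa using hi)]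
    simp
  have hexit := grid2Dist_le_of_mem_Icc (hfbox m) hy
  refine ⟨(x :: (List.range (m + 1)).map f) ++ [y], rfl, List.getLast?_concat,
    fun z hz => ?_, ?_⟩
  · obtain ⟨i, hi, rfl⟩ := hfcover z hz
    simp only [List.cons_append, List.mem_cons, List.mem_append, List.mem_map, List.mem_range]
    exact Or.inr (Or.inl ⟨i, hi, rfl⟩)
  · rw [pathLength_append_singleton _ (by simp), pathLength_cons _ (by simp), hsnake,
      List.getLast_cons (by simp)]
    simp only [List.head_map, List.head_range, List.getLast_map, List.getLast_range,
      add_tsub_cancel_right]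
    have hm : (m : ℝ) = ((hi.1 - lo.1 : ℤ) : ℝ) * ((hi.2 - lo.2 : ℤ) : ℝ) +
        ((hi.1 - lo.1 : ℤ) : ℝ) + ((hi.2 - lo.2 : ℤ) : ℝ) := by
      have : (m : ℤ) = (hi.1 - lo.1) * (hi.2 - lo.2) + (hi.1 - lo.1) + (hi.2 - lo.2) := by
        push_cast at hN; linarith
      exact_mod_cast this
    push_cast at hfenter hexit hm ⊢
    linarith

end Grid

theorem statement16_general (k n : ℕ) :
    TSPEfficient (grid2Dist : Grid2 k n → Grid2 k n → ℝ) ((k : ℝ) + 5) := by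
  intro p q
  set S : Set (Grid2 k n) := {p.2, q.2} ∪ sd p q
  have hS : S.Finite := (Set.toFinite _).union (finite_sd p q)
  have hpS : p.2 ∈ S := by simp [S]
  have hqS : q.2 ∈ S := by simp [S]
  obtain ⟨a, ha, hamin⟩ := S.exists_min_image (fun z => z.1.1) hS ⟨_, hpS⟩
  obtain ⟨b, hb, hbmax⟩ := S.exists_max_image (fun z => z.1.1) hS ⟨_, hpS⟩
  obtain ⟨c, hc, hcmin⟩ := S.exists_min_image (fun z => z.1.2) hS ⟨_, hpS⟩
  obtain ⟨e, he, hemax⟩ := S.exists_max_image (fun z => z.1.2) hS ⟨_, hpS⟩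
  have hbox : ∀ z ∈ S, z.1 ∈ Icc (a.1.1, c.1.2) (b.1.1, e.1.2) := fun z hz =>
    ⟨⟨hamin z hz, hcmin z hz⟩, hbmax z hz, hemax z hz⟩
  obtain ⟨l, hhead, hlast, hcover, hlen⟩ :=
    exists_route_covering_box (lo := (a.1.1, c.1.2)) (hi := (b.1.1, e.1.2)) ⟨a.2.1, c.2.2.2.1⟩
      ⟨b.2.2.1, e.2.2.2.2⟩ (hbox _ hpS) (hbox _ hqS)
  have hw₁ := (sub_fst_le_grid2Dist a b).trans (le_TSCP _ ha hb)
  have hw₂ := (sub_snd_le_grid2Dist c e).trans (le_TSCP _ hc he)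
  have hwk : ((b.1.1 - a.1.1 : ℤ) : ℝ) ≤ k := by
    exact_mod_cast (by linarith [a.2.1, b.2.2.1] : b.1.1 - a.1.1 ≤ k)
  have hw₁0 : (0 : ℝ) ≤ ((b.1.1 - a.1.1 : ℤ) : ℝ) := by exact_mod_cast sub_nonneg.2 (hamin b hb)
  have hw₂0 : (0 : ℝ) ≤ ((e.1.2 - c.1.2 : ℤ) : ℝ) := by exact_mod_cast sub_nonneg.2 (hcmin e he)
  calc TSP grid2Dist p q ≤ pathLength grid2Dist l :=
        TSP_le_pathLength _ grid2Dist_nonneg hhead hlast fun z hz => hcover z (hbox z (Or.inr hz))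
    _ ≤ _ := hlen
    _ ≤ ((k : ℝ) + 5) * TSCP grid2Dist p q := by
        nlinarith [mul_le_mul hwk hw₂ hw₂0 (Nat.cast_nonneg k)]

/-- For all `k ≤ n`, the two-dimensional rectangular grid
`G_{k,n} = ([0,k] ∩ ℤ) × ([0,n] ∩ ℤ)` with the ℓ1 metric is `(k+5)`-TSP-efficient. -/
theorem statement16 (k n : ℕ) (h : k ≤ n) :
    TSPEfficient (grid2Dist : Grid2 k n → Grid2 k n → ℝ) ((k : ℝ) + 5) :=
  statement16_general k n

end Lamplighter
end
end
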